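/- arXiv:1411.3643 — 11 statements merged into one kernel-verified Lean document; each statement's English description precedes it below -/
import Mathlib

section
/- Let $D$ be a $(v,k,\lambda)$ difference set in a finite group $G$ of order $v$. For each non-identity element $x \in G$, define $D_x = D \cap Dx$ where $Dx = \{dx : d \in D\}$. Then the collection $\{D_x : x \in G \setminus \{1\}\}$ is a $(v, \lambda, \lambda(\lambda-1); v-1)$ difference family in $G$; that is, each $D_x$ has cardinality $\lambda$, and every non-identity element of $G$ occurs exactly $\lambda(\lambda-1)$ times in the multiset union over all $x$ of $\{d_1^{-1}d_2 : d_1, d_2 \in D_x, d_1 \neq d_2\}$. -/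
open scoped Classical

open Matrix


private lemma sum_ite_card' {G : Type*} [Fintype G] (p : G → Prop) [DecidablePred p] :
    (∑ z : G, (if p z then (1:ℚ) else 0)) = ((Finset.univ.filter p).card : ℚ) := by
  simp [Finset.sum_boole]

private lemma my_ite_mul_ite (P Q : Prop) [Decidable P] [Decidable Q] :
    (if P then (1:ℚ) else 0) * (if Q then 1 else 0) = if P ∧ Q then 1 else 0 := by
  by_cases P <;> by_cases Q <;> simp [*]

private lemma my_inv_lemma {G : Type*} [Fintype G] [DecidableEq G]
    (J : Matrix G G ℚ) (a b v : ℚ)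
    (ha : a ≠ 0) (hb : a + b * v ≠ 0) (hJJ : J * J = v • J) :
    (a • 1 + b • J) * (a⁻¹ • (1 : Matrix G G ℚ) + (-b / (a * (a + b * v))) • J) = 1 := by
  simp only [Matrix.add_mul, Matrix.mul_add, Matrix.smul_mul, Matrix.mul_smul,
    Matrix.one_mul, Matrix.mul_one, hJJ, smul_smul]
  simp only [smul_add, smul_smul, inv_mul_cancel₀ ha, one_smul, add_assoc, ← add_smul]
  rw [show a⁻¹ * b + -b / (a * (a + b * v)) * (a + b * v) = 0 by field_simp; ring,
    zero_smul, add_zero]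

private lemma key_left {G : Type*} [Group G] [Fintype G] [DecidableEq G] (lam : ℕ) (D : Finset G)
    (hL : ∀ w : G, w ≠ 1 → (D.filter fun d => d * w ∈ D).card = lam) :
    ∀ w : G, w ≠ 1 → (D.filter fun d => w * d ∈ D).card = lam := by
  classical
  intro w hw
  set k := D.card with hk
  have hlamk : lam ≤ k := by
    rw [← hL w hw]; exact Finset.card_filter_le _ _
  rcases eq_or_lt_of_le hlamk with heq | hlt
  · -- degenerate: lam = k, so D = ∅ or D = univ
    have hfull : ∀ w' : G, w' ≠ 1 → ∀ d ∈ D, d * w' ∈ D := by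
      intro w' hw' d hd
      have h1 : (D.filter fun d => d * w' ∈ D) = D := by
        apply Finset.eq_of_subset_of_card_le (Finset.filter_subset _ _)
        rw [hL w' hw']; omega
      have hd' : d ∈ D.filter (fun d => d * w' ∈ D) := h1.symm ▸ hd
      exact (Finset.mem_filter.mp hd').2
    rcases D.eq_empty_or_nonempty with hD | ⟨d₀, hd₀⟩
    · have hk0 : k = 0 := by rw [hk, hD]; simp
      rw [hD]; simp; omega
    · have hDuniv : D = Finset.univ := by
        ext x
        simp only [Finset.mem_univ, iff_true]
        by_cases hx : d₀⁻¹ * x = 1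
        · rwa [show x = d₀ from by simpa [eq_comm] using inv_mul_eq_one.mp hx]
        · simpa [mul_assoc] using hfull _ hx d₀ hd₀
      rw [hDuniv]
      rw [Finset.filter_true_of_mem (fun d _ => Finset.mem_univ _)]
      rw [heq, hk, hDuniv]
  · -- main case: lam < k, matrix argument
    set v := Fintype.card G with hv
    have c1 : ∀ x : G, (Finset.univ.filter fun z => x⁻¹ * z ∈ D).card = k := by
      intro x; rw [hk]
      apply Finset.card_bij (fun z _ => x⁻¹ * z)
      · intro z hz; simpa using (Finset.mem_filter.mp hz).2
      · intro a _ b _ hab; exact mul_left_cancel hab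
      · intro d hd; exact ⟨x * d, by simpa using hd, by group⟩
    have c2 : ∀ y : G, (Finset.univ.filter fun z => z⁻¹ * y ∈ D).card = k := by
      intro y; rw [hk]
      apply Finset.card_bij (fun z _ => z⁻¹ * y)
      · intro z hz; simpa using (Finset.mem_filter.mp hz).2
      · intro a _ b _ hab
        have : a⁻¹ = b⁻¹ := mul_right_cancel hab
        simpa using congrArg (·⁻¹) this
      · intro d hd; exact ⟨y * d⁻¹, by simpa using hd, by group⟩
    have c3 : ∀ x y : G, (Finset.univ.filter fun z => x⁻¹ * z ∈ D ∧ y⁻¹ * z ∈ D).card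
        = (D.filter fun d => (x⁻¹ * y) * d ∈ D).card := by
      intro x y
      apply Finset.card_bij (fun z _ => y⁻¹ * z)
      · intro z hz
        have h := Finset.mem_filter.mp hz
        refine Finset.mem_filter.mpr ⟨h.2.2, ?_⟩
        have he : (x⁻¹ * y) * (y⁻¹ * z) = x⁻¹ * z := by group
        rw [he]; exact h.2.1
      · intro a _ b _ hab; exact mul_left_cancel hab
      · intro d hd
        have h := Finset.mem_filter.mp hd
        refine ⟨y * d, Finset.mem_filter.mpr ⟨Finset.mem_univ _, ?_, by simpa using h.1⟩, by group⟩
        have he : x⁻¹ * (y * d) = (x⁻¹ * y) * d := by group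
        rw [he]; exact h.2
    have c4 : ∀ x y : G, (Finset.univ.filter fun z => z⁻¹ * x ∈ D ∧ z⁻¹ * y ∈ D).card
        = (D.filter fun d => d * (x⁻¹ * y) ∈ D).card := by
      intro x y
      apply Finset.card_bij (fun z _ => z⁻¹ * x)
      · intro z hz
        have h := Finset.mem_filter.mp hz
        refine Finset.mem_filter.mpr ⟨h.2.1, ?_⟩
        have he : (z⁻¹ * x) * (x⁻¹ * y) = z⁻¹ * y := by group
        rw [he]; exact h.2.2
      · intro a _ b _ hab
        have : a⁻¹ = b⁻¹ := mul_right_cancel hab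
        simpa using congrArg (·⁻¹) this
      · intro d hd
        have h := Finset.mem_filter.mp hd
        refine ⟨x * d⁻¹, Finset.mem_filter.mpr ⟨Finset.mem_univ _, by simpa using h.1, ?_⟩, by group⟩
        have he : (x * d⁻¹)⁻¹ * y = d * (x⁻¹ * y) := by group
        rw [he]; exact h.2
    set A : Matrix G G ℚ := Matrix.of fun x y => if x⁻¹ * y ∈ D then 1 else 0 with hA
    set J : Matrix G G ℚ := Matrix.of fun _ _ => 1 with hJ
    have hAJ : A * J = (k : ℚ) • J := by
      ext x y
      simp only [Matrix.mul_apply, Matrix.smul_apply, hA, hJ, Matrix.of_apply, mul_one,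
        smul_eq_mul]
      rw [sum_ite_card', c1 x]
    have hJA : J * A = (k : ℚ) • J := by
      ext x y
      simp only [Matrix.mul_apply, Matrix.smul_apply, hA, hJ, Matrix.of_apply, one_mul,
        smul_eq_mul, mul_one]
      rw [sum_ite_card', c2 y]
    have hJJ : J * J = (v : ℚ) • J := by
      ext x y
      simp [Matrix.mul_apply, hJ, hv, Finset.card_univ]
    set M : Matrix G G ℚ := ((k : ℚ) - lam) • 1 + (lam : ℚ) • J with hM
    have hentryAAT : ∀ x y : G, (A * Aᵀ) x y
        = ((D.filter fun d => (x⁻¹ * y) * d ∈ D).card : ℚ) := by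
      intro x y
      simp only [Matrix.mul_apply, Matrix.transpose_apply, hA, Matrix.of_apply, my_ite_mul_ite]
      rw [sum_ite_card', c3 x y]
    have hentryATA : ∀ x y : G, (Aᵀ * A) x y
        = ((D.filter fun d => d * (x⁻¹ * y) ∈ D).card : ℚ) := by
      intro x y
      simp only [Matrix.mul_apply, Matrix.transpose_apply, hA, Matrix.of_apply, my_ite_mul_ite]
      rw [sum_ite_card', c4 x y]
    have hMentry : ∀ x y : G, x ≠ y → M x y = (lam : ℚ) := by
      intro x y hxy
      simp [hM, Matrix.one_apply_ne hxy, hJ]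
    have hATA : Aᵀ * A = M := by
      ext x y
      rw [hentryATA x y]
      by_cases hxy : x = y
      · subst hxy
        have hfil : (D.filter fun d => d * (x⁻¹ * x) ∈ D) = D := by
          rw [inv_mul_cancel]
          exact Finset.filter_true_of_mem (fun d hd => by simpa using hd)
        rw [hfil, ← hk]
        simp only [hM, Matrix.add_apply, Matrix.smul_apply, Matrix.one_apply_eq, hJ,
          Matrix.of_apply, smul_eq_mul, mul_one]
        ring
      · have hne : x⁻¹ * y ≠ 1 := fun h => hxy (inv_mul_eq_one.mp h)
        rw [hL _ hne, hMentry x y hxy]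
    have ha : ((k : ℚ) - lam) ≠ 0 := by
      have : (lam : ℚ) < k := by exact_mod_cast hlt
      linarith
    have hb : ((k : ℚ) - lam) + lam * v ≠ 0 := by
      have h1 : (lam : ℚ) < k := by exact_mod_cast hlt
      have h2 : (0:ℚ) ≤ (lam : ℚ) * v := by positivity
      linarith
    set N : Matrix G G ℚ := ((k : ℚ) - lam)⁻¹ • 1 +
      (-(lam : ℚ) / (((k : ℚ) - lam) * (((k : ℚ) - lam) + lam * v))) • J with hN
    have hMN : M * N = 1 := by
      rw [hM, hN]
      exact my_inv_lemma J ((k : ℚ) - lam) (lam : ℚ) (v : ℚ) ha hb hJJ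
    have hNM : N * M = 1 := mul_eq_one_comm.mp hMN
    have hAM : A * M = M * A := by
      rw [hM]
      simp only [Matrix.mul_add, Matrix.add_mul, Matrix.mul_smul, Matrix.smul_mul,
        Matrix.mul_one, Matrix.one_mul, hAJ, hJA]
    have hANAT : (A * N) * Aᵀ = 1 := by
      apply mul_eq_one_comm.mp
      calc Aᵀ * (A * N) = (Aᵀ * A) * N := by rw [Matrix.mul_assoc]
        _ = M * N := by rw [hATA]
        _ = 1 := hMN
    have hAAT : M = A * Aᵀ := by
      calc M = M * ((A * N) * Aᵀ) := by rw [hANAT, Matrix.mul_one]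
        _ = ((M * A) * N) * Aᵀ := by simp only [Matrix.mul_assoc]
        _ = ((A * M) * N) * Aᵀ := by rw [hAM]
        _ = (A * (M * N)) * Aᵀ := by simp only [Matrix.mul_assoc]
        _ = A * Aᵀ := by rw [hMN, Matrix.mul_one]
    have hwinv : w⁻¹ ≠ (1:G) := fun h => hw (by simpa using congrArg (·⁻¹) h)
    have hfinal := (hMentry w⁻¹ 1 hwinv).symm.trans ((congrFun (congrFun hAAT w⁻¹) 1).trans
      (hentryAAT w⁻¹ 1))
    have hsame : (D.filter fun d => (w⁻¹⁻¹ * 1) * d ∈ D) = D.filter fun d => w * d ∈ D := by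
      simp
    rw [hsame] at hfinal
    exact_mod_cast hfinal.symm

theorem stmt_0 {G : Type*} [Group G] [Fintype G] (v k lam : ℕ)
    (D : Finset G)
    (hv : Fintype.card G = v) (hk : D.card = k)
    (hDS : ∀ w : G, w ≠ 1 → (D ∩ D.image (· * w)).card = lam) :
    (∀ x : G, x ≠ 1 → (D ∩ D.image (· * x)).card = lam) ∧
    (∀ g : G, g ≠ 1 →
      ∑ x ∈ Finset.univ.filter (fun x : G => x ≠ 1),
        (((D ∩ D.image (· * x)) ×ˢ (D ∩ D.image (· * x))).filter
          (fun p => p.1 ≠ p.2 ∧ p.1⁻¹ * p.2 = g)).card = lam * (lam - 1)) := by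
  classical
  have hDx : ∀ x : G, D ∩ D.image (· * x) = D.filter (fun d => d * x⁻¹ ∈ D) := by
    intro x
    ext d
    simp only [Finset.mem_inter, Finset.mem_image, Finset.mem_filter]
    constructor
    · rintro ⟨hd, e, he, rfl⟩
      refine ⟨hd, ?_⟩
      simpa [mul_assoc] using he
    · rintro ⟨hd, hd2⟩
      exact ⟨hd, d * x⁻¹, hd2, by group⟩
  refine ⟨hDS, ?_⟩
  intro g hg
  have hL : ∀ w : G, w ≠ 1 → (D.filter fun d => d * w ∈ D).card = lam := by
    intro w hw
    have h1 := hDS w⁻¹ (fun h => hw (by simpa using congrArg (·⁻¹) h))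
    rw [hDx] at h1
    simpa using h1
  have hR := key_left lam D hL
  have step1 : ∀ x : G, (((D ∩ D.image (· * x)) ×ˢ (D ∩ D.image (· * x))).filter
      (fun p => p.1 ≠ p.2 ∧ p.1⁻¹ * p.2 = g)).card
      = (D.filter fun d => d * g ∈ D ∧ (d * x⁻¹ ∈ D ∧ (d * g) * x⁻¹ ∈ D)).card := by
    intro x
    rw [hDx]
    apply Finset.card_bij' (fun p _ => p.1) (fun d _ => (d, d * g))
    · intro p hp
      simp only [Finset.mem_filter, Finset.mem_product] at hp
      obtain ⟨⟨⟨h1, h2⟩, h3, h4⟩, _, h6⟩ := hp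
      have hp2 : p.2 = p.1 * g := by rw [← h6]; group
      refine Finset.mem_filter.mpr ⟨h1, ?_, h2, ?_⟩
      · rw [← hp2]; exact h3
      · rw [← hp2]; exact h4
    · intro d hd
      simp only [Finset.mem_filter] at hd
      obtain ⟨h1, h2, h3, h4⟩ := hd
      simp only [Finset.mem_filter, Finset.mem_product]
      refine ⟨⟨⟨h1, h3⟩, h2, h4⟩, ?_, by group⟩
      intro h
      exact hg (by simpa [eq_comm] using (left_eq_mul.mp h))
    · intro p hp
      simp only [Finset.mem_filter, Finset.mem_product] at hp
      have hp2 : p.2 = p.1 * g := by rw [← hp.2.2]; group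
      exact Prod.ext rfl hp2.symm
    · intro d _
      rfl
  rw [Finset.sum_congr rfl (fun x _ => step1 x)]
  simp only [Finset.card_filter]
  rw [Finset.sum_comm]
  have step2 : ∀ d ∈ D,
      (∑ x ∈ Finset.univ.filter (fun x : G => x ≠ 1),
        if d * g ∈ D ∧ (d * x⁻¹ ∈ D ∧ (d * g) * x⁻¹ ∈ D) then 1 else 0)
      = if d * g ∈ D then
          (∑ x ∈ Finset.univ.filter (fun x : G => x ≠ 1),
            if d * x⁻¹ ∈ D ∧ (d * g) * x⁻¹ ∈ D then 1 else 0) else 0 := by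
    intro d _
    by_cases h : d * g ∈ D <;> simp [h]
  rw [Finset.sum_congr rfl step2, ← Finset.sum_filter]
  have step3 : ∀ d ∈ D.filter (fun d => d * g ∈ D),
      (∑ x ∈ Finset.univ.filter (fun x : G => x ≠ 1),
        if d * x⁻¹ ∈ D ∧ (d * g) * x⁻¹ ∈ D then 1 else 0) = lam - 1 := by
    intro d hd
    obtain ⟨hd1, hd2⟩ := Finset.mem_filter.mp hd
    rw [← Finset.card_filter, Finset.filter_filter]
    have hcard : (Finset.univ.filter fun x : G => x ≠ 1 ∧ (d * x⁻¹ ∈ D ∧ (d * g) * x⁻¹ ∈ D)).card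
        = ((D.filter fun e => (d * g * d⁻¹) * e ∈ D).erase d).card := by
      apply Finset.card_bij (fun x _ => d * x⁻¹)
      · intro x hx
        simp only [Finset.mem_filter, Finset.mem_univ, true_and] at hx
        obtain ⟨hx1, hx2, hx3⟩ := hx
        refine Finset.mem_erase.mpr ⟨?_, Finset.mem_filter.mpr ⟨hx2, ?_⟩⟩
        · intro h
          exact hx1 (by simpa using (mul_right_cancel (b := x⁻¹) (by simpa using h) : _))
        · have he : (d * g * d⁻¹) * (d * x⁻¹) = d * g * x⁻¹ := by group
          rw [he]; exact hx3
      · intro a _ b _ hab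
        have : a⁻¹ = b⁻¹ := mul_left_cancel hab
        simpa using congrArg (·⁻¹) this
      · intro e he
        obtain ⟨hne, he2⟩ := Finset.mem_erase.mp he
        obtain ⟨he3, he4⟩ := Finset.mem_filter.mp he2
        refine ⟨e⁻¹ * d, ?_, by group⟩
        simp only [Finset.mem_filter, Finset.mem_univ, true_and]
        refine ⟨?_, by simpa [mul_assoc] using he3, ?_⟩
        · intro h
          exact hne (by simpa [eq_comm] using inv_mul_eq_one.mp h)
        · have he5 : (d * g) * (e⁻¹ * d)⁻¹ = (d * g * d⁻¹) * e := by group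
          rw [he5]; exact he4
    rw [hcard, Finset.card_erase_of_mem, hR (d * g * d⁻¹)]
    · intro h
      apply hg
      have : d * g = d := by
        have := congrArg (· * d) h
        simpa [mul_assoc] using this
      simpa using mul_left_cancel (a := d) (by simpa using this)
    · refine Finset.mem_filter.mpr ⟨hd1, ?_⟩
      have : (d * g * d⁻¹) * d = d * g := by group
      rw [this]; exact hd2
  rw [Finset.sum_congr rfl step3, Finset.sum_const, smul_eq_mul, hL g hg]
end

section
/- Let $D$ be a $(v,k,\lambda)$ difference set in a finite group $G$ of order $v$ with $\gcd(v, \lambda) = 1$. Then for every non-identity $x \in G$, the only element $g \in G$ satisfying $Dg \cap Dxg = D \cap Dx$ is $g = 1$. -/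
/-!
Since $(D \cap Dx)g = Dg \cap Dxg$, the hypothesis says that the set $D \cap Dx$, of size
$\lambda$, is stable under right multiplication by $g$. It is therefore a union of left cosets
of $\langle g \rangle$, so the order of $g$ divides $\lambda$; it also divides $v$, and
$\gcd(v, \lambda) = 1$ forces $g = 1$.
-/

open Pointwise

theorem Subgroup.card_dvd_card_of_mul_mem {G : Type*} [Group G] (H : Subgroup G) {s : Set G}
    (hs : ∀ a ∈ s, ∀ h ∈ H, a * h ∈ s) : Nat.card H ∣ Nat.card s := by
  have hsH : s * H = s := by
    refine (Set.mul_subset_iff.mpr fun a ha h hh => hs a ha h hh).antisymm fun a ha => ?_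
    exact Set.mem_mul.mpr ⟨a, ha, 1, H.one_mem, mul_one a⟩
  have hpre : QuotientGroup.mk ⁻¹' (QuotientGroup.mk '' s : Set (G ⧸ H)) = s := by
    rw [QuotientGroup.preimage_image_mk_eq_mul, hsH]
  rw [← hpre, Nat.card_congr (QuotientGroup.preimageMkEquivSubgroupProdSet H _), Nat.card_prod]
  exact dvd_mul_right _ _

theorem orderOf_dvd_card_of_mul_mem {G : Type*} [Group G] [Finite G] {s : Set G} {g : G}
    (hs : ∀ a ∈ s, a * g ∈ s) : orderOf g ∣ Nat.card s := by
  have hpow : ∀ a ∈ s, ∀ n : ℕ, a * g ^ n ∈ s := by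
    intro a ha n
    induction n with
    | zero => simpa using ha
    | succ n ih => simpa [pow_succ, mul_assoc] using hs _ ih
  rw [← Nat.card_zpowers]
  refine (Subgroup.zpowers g).card_dvd_card_of_mul_mem fun a ha h hh => ?_
  obtain ⟨n, rfl⟩ := mem_powers_iff_mem_zpowers.mpr hh
  exact hpow a ha n

open scoped Classical

theorem stmt_2_general {G : Type*} [Group G] [Fintype G] (v lam : ℕ)
    (D : Finset G)
    (hv : Fintype.card G = v)
    (hDS : ∀ w : G, w ≠ 1 → (D ∩ D.image (· * w)).card = lam)
    (hgcd : Nat.gcd v lam = 1) :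
    ∀ x : G, x ≠ 1 → ∀ g : G,
      D.image (· * g) ∩ D.image (· * (x * g)) = D ∩ D.image (· * x) → g = 1 := by
  intro x hx g hEq
  set S : Finset G := D ∩ D.image (· * x) with hS
  have hstable : ∀ a ∈ (S : Set G), a * g ∈ (S : Set G) := by
    intro a ha
    simp only [hS, Finset.coe_inter, Finset.coe_image, Set.mem_inter_iff, Set.mem_image,
      Finset.mem_coe] at ha
    obtain ⟨haD, d, hdD, rfl⟩ := ha
    rw [Finset.mem_coe, ← hEq, Finset.mem_inter]
    exact ⟨Finset.mem_image_of_mem _ haD, Finset.mem_image.mpr ⟨d, hdD, (mul_assoc d x g).symm⟩⟩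
  have hdvd_lam : orderOf g ∣ lam := by
    rw [← hDS x hx, ← Nat.card_eq_finsetCard]
    exact orderOf_dvd_card_of_mul_mem hstable
  have hdvd_v : orderOf g ∣ v := hv ▸ orderOf_dvd_card
  exact orderOf_eq_one_iff.mp (Nat.eq_one_of_dvd_one (hgcd ▸ Nat.dvd_gcd hdvd_v hdvd_lam))

theorem stmt_2 {G : Type*} [Group G] [Fintype G] (v k lam : ℕ)
    (D : Finset G)
    (hv : Fintype.card G = v) (hk : D.card = k)
    (hDS : ∀ w : G, w ≠ 1 → (D ∩ D.image (· * w)).card = lam)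
    (hgcd : Nat.gcd v lam = 1) :
    ∀ x : G, x ≠ 1 → ∀ g : G,
      D.image (· * g) ∩ D.image (· * (x * g)) = D ∩ D.image (· * x) → g = 1 :=
  stmt_2_general v lam D hv hDS hgcd
end

section
/- Let $G$ be a finite group of even order $v$ and let $D$ be a $(v,k,\lambda)$ difference set in $G$. Then $\gcd(v, \lambda) > 1$. -/
open scoped Classical

private lemma even_card_of_invol {α : Type*} [DecidableEq α] (f : α → α)
    (hf : ∀ x, f (f x) = x) (hne : ∀ x, f x ≠ x) :
    ∀ n (S : Finset α), S.card = n → (∀ x ∈ S, f x ∈ S) → Even S.card := by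
  intro n
  induction n using Nat.strong_induction_on with
  | _ n ih =>
    intro S hcard hS
    rcases S.eq_empty_or_nonempty with rfl | ⟨x, hx⟩
    · simp
    · have hfx : f x ∈ S := hS x hx
      set S' := S \ {x, f x} with hS'def
      have hsub : ({x, f x} : Finset α) ⊆ S := by
        intro y hy
        simp only [Finset.mem_insert, Finset.mem_singleton] at hy
        rcases hy with rfl | rfl <;> assumption
      have hpaircard : ({x, f x} : Finset α).card = 2 := by
        rw [Finset.card_insert_of_notMem (by simp [Ne.symm (hne x)]),
          Finset.card_singleton]
      have hcard' : S'.card = S.card - 2 := by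
        rw [hS'def, Finset.card_sdiff_of_subset hsub, hpaircard]
      have hinv' : ∀ y ∈ S', f y ∈ S' := by
        intro y hy
        rw [hS'def, Finset.mem_sdiff] at hy ⊢
        obtain ⟨hyS, hymem⟩ := hy
        simp only [Finset.mem_insert, Finset.mem_singleton] at hymem ⊢
        push_neg at hymem ⊢
        refine ⟨hS y hyS, ?_, ?_⟩
        · intro h; exact hymem.2 (by rw [← h, hf])
        · intro h
          have : y = x := by
            have := congrArg f h
            rwa [hf, hf] at this
          exact hymem.1 this
      have hcardlt : S'.card < n := by
        have h2 : 2 ≤ S.card := by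
          calc 2 = ({x, f x} : Finset α).card := hpaircard.symm
          _ ≤ S.card := Finset.card_le_card hsub
        omega
      have heven := ih S'.card hcardlt S' rfl hinv'
      have h2 : 2 ≤ S.card := by
        calc 2 = ({x, f x} : Finset α).card := hpaircard.symm
        _ ≤ S.card := Finset.card_le_card hsub
      rw [hcard'] at heven
      rcases heven with ⟨m, hm⟩
      exact ⟨m + 1, by omega⟩

theorem stmt_3 {G : Type*} [Group G] [Fintype G] (v k lam : ℕ)
    (D : Finset G)
    (hv : Fintype.card G = v) (hveven : Even v) (hk : D.card = k)
    (hDS : ∀ w : G, w ≠ 1 → (D ∩ D.image (· * w)).card = lam) :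
    1 < Nat.gcd v lam := by
  have hvpos : 0 < v := hv ▸ Fintype.card_pos
  have h2v : 2 ∣ v := hveven.two_dvd
  -- get an involution
  obtain ⟨g, hg⟩ := exists_prime_orderOf_dvd_card 2 (by rw [hv]; exact h2v)
  have hg1 : g ≠ 1 := by
    intro h; rw [h, orderOf_one] at hg; norm_num at hg
  have hgg : g * g = 1 := by
    have := pow_orderOf_eq_one g
    rwa [hg, pow_two] at this
  -- the intersection set is invariant under right mult by g
  have hlam : Even lam := by
    rw [← hDS g hg1]
    refine even_card_of_invol (fun x => x * g) (fun x => by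
        show x * g * g = x
        rw [mul_assoc, hgg, mul_one]) (fun x h => by
        have h' : x * g = x := h
        exact hg1 (mul_left_cancel (a := x) (by rw [mul_one]; exact h'))) _ _ rfl ?_
    intro x hx
    rw [Finset.mem_inter] at hx ⊢
    obtain ⟨hxD, hxI⟩ := hx
    rw [Finset.mem_image] at hxI ⊢
    obtain ⟨d, hd, hdx⟩ := hxI
    constructor
    · show x * g ∈ D
      have hxg : x * g = d := by rw [← hdx, mul_assoc, hgg, mul_one]
      rwa [hxg]
    · exact ⟨x, hxD, rfl⟩
  have h2lam : 2 ∣ lam := hlam.two_dvd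
  have hdg : 2 ∣ Nat.gcd v lam := Nat.dvd_gcd h2v h2lam
  have hpos : 0 < Nat.gcd v lam := Nat.gcd_pos_of_pos_left lam hvpos
  exact lt_of_lt_of_le one_lt_two (Nat.le_of_dvd hpos hdg)
end

section
/- Let $G$ be a finite abelian group, $D$ a $(v,k,\lambda)$ difference set in $G$, and $H$ a subgroup of $G$ of index $\ell$ with coset representatives $1 = g_0, g_1, \ldots, g_{\ell-1}$. Define $D_i \subseteq H$ by $D_i g_i = D \cap H g_i$. Then $\{D_0, D_1, \ldots, D_{\ell-1}\}$ is a difference family in $H$ with index $\lambda$: every non-identity element $h \in H$ has exactly $\lambda$ representations $h = d_1 d_2^{-1}$ with $d_1, d_2$ distinct elements of a common block $D_i$. -/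
open scoped Classical

theorem stmt_6 {G : Type*} [CommGroup G] [Fintype G] (v k lam ℓ : ℕ)
    (D : Finset G) (H : Subgroup G)
    (hv : Fintype.card G = v) (hk : D.card = k)
    (hDS : ∀ w : G, w ≠ 1 → (D ∩ D.image (· * w)).card = lam)
    (hℓ : H.index = ℓ)
    (g : Fin ℓ → G) (hg0 : ∀ h0 : 0 < ℓ, g ⟨0, h0⟩ = 1)
    (hreps : ∀ a : G, ∃! i : Fin ℓ, a * (g i)⁻¹ ∈ H) :
    ∀ h : G, h ∈ H → h ≠ 1 →
      ∑ i : Fin ℓ,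
        ((((D.filter (fun d => d * (g i)⁻¹ ∈ H)).image (· * (g i)⁻¹)) ×ˢ
          ((D.filter (fun d => d * (g i)⁻¹ ∈ H)).image (· * (g i)⁻¹))).filter
            (fun p => p.1 ≠ p.2 ∧ p.1 * p.2⁻¹ = h)).card = lam := by
  intro h hH hne
  classical
  set S : Finset G := D.filter (fun d => d * h ∈ D) with hS
  have key : ∀ i : Fin ℓ,
      ((((D.filter (fun d => d * (g i)⁻¹ ∈ H)).image (· * (g i)⁻¹)) ×ˢ
          ((D.filter (fun d => d * (g i)⁻¹ ∈ H)).image (· * (g i)⁻¹))).filter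
            (fun p => p.1 ≠ p.2 ∧ p.1 * p.2⁻¹ = h)).card
      = (S.filter (fun d => d * (g i)⁻¹ ∈ H)).card := by
    intro i
    apply Finset.card_bij (fun p _ => p.2 * g i)
    · intro p hp
      simp only [Finset.mem_filter, Finset.mem_product, Finset.mem_image] at hp
      obtain ⟨⟨⟨d1, hd1, hd1e⟩, ⟨d2, hd2, hd2e⟩⟩, hneq, heq⟩ := hp
      have hd2g : p.2 * g i = d2 := by rw [← hd2e]; group
      have h1 : p.1 = h * p.2 := by
        rw [← heq]; group
      refine Finset.mem_filter.mpr ⟨Finset.mem_filter.mpr ⟨hd2g ▸ hd2.1, ?_⟩, hd2g ▸ hd2.2⟩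
      have hd1g : p.1 * g i = d1 := by rw [← hd1e]; group
      have : p.2 * g i * h = d1 := by
        rw [← hd1g, h1]
        simp [mul_comm, mul_left_comm, mul_assoc]
      rw [this]; exact hd1.1
    · intro p hp q hq hpq
      simp only [Finset.mem_filter] at hp hq
      have h1 : p.1 = h * p.2 := by rw [← hp.2.2]; group
      have h2 : q.1 = h * q.2 := by rw [← hq.2.2]; group
      have h22 : p.2 = q.2 := mul_right_cancel hpq
      have : p = (p.1, p.2) := rfl
      rw [Prod.ext_iff]
      exact ⟨by rw [h1, h2, h22], h22⟩
    · intro d hd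
      simp only [hS, Finset.mem_filter] at hd
      obtain ⟨⟨hdD, hdhD⟩, hdH⟩ := hd
      refine ⟨((d * h) * (g i)⁻¹, d * (g i)⁻¹), ?_, by group⟩
      simp only [Finset.mem_filter, Finset.mem_product, Finset.mem_image]
      have hdhH : d * h * (g i)⁻¹ ∈ H := by
        have : d * h * (g i)⁻¹ = h * (d * (g i)⁻¹) := by
          simp [mul_comm, mul_left_comm, mul_assoc]
        rw [this]; exact H.mul_mem hH hdH
      refine ⟨⟨⟨d * h, by simp [hdhD, hdhH], rfl⟩, ⟨d, by simp [hdD, hdH], rfl⟩⟩, ?_, ?_⟩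
      · intro hcontra
        apply hne
        have := mul_right_cancel hcontra
        exact mul_left_cancel (a := d) (by rw [this, mul_one])
      · simp [mul_inv_rev, inv_inv, mul_assoc, mul_comm, mul_left_comm]
  rw [Finset.sum_congr rfl (fun i _ => key i)]
  have hsum : ∑ i : Fin ℓ, (S.filter (fun d => d * (g i)⁻¹ ∈ H)).card = S.card := by
    have := Finset.card_eq_sum_card_fiberwise
      (s := S) (t := (Finset.univ : Finset (Fin ℓ)))
      (f := fun d => (hreps d).choose) (fun x _ => Finset.mem_univ _)
    rw [this]
    apply Finset.sum_congr rfl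
    intro i _
    congr 1
    apply Finset.filter_congr
    intro d _
    constructor
    · intro hdi
      exact ((hreps d).choose_spec.2 i hdi).symm
    · intro hdi
      exact hdi ▸ (hreps d).choose_spec.1
  rw [hsum]
  have hSeq : S = D ∩ D.image (· * h⁻¹) := by
    ext x
    simp only [hS, Finset.mem_filter, Finset.mem_inter, Finset.mem_image]
    constructor
    · rintro ⟨hx, hxh⟩
      exact ⟨hx, ⟨x * h, hxh, by group⟩⟩
    · rintro ⟨hx, ⟨d, hd, hde⟩⟩
      refine ⟨hx, ?_⟩
      have : x * h = d := by rw [← hde]; group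
      rw [this]; exact hd
  rw [hSeq]
  exact hDS h⁻¹ (inv_ne_one.mpr hne)
end

section
/- Let $G$ be a finite abelian group of order $v = n\ell$, $D$ a $(v,k,\lambda)$ difference set in $G$, $H$ a subgroup of order $n$, and $k_i = |D \cap Hg_i|$ the intersection numbers with respect to $H$. Then for every $i$, $\frac{k}{\ell} - \sqrt{\frac{(k-\lambda)(\ell-1)}{\ell}} \le k_i \le \frac{k}{\ell} + \sqrt{\frac{(k-\lambda)(\ell-1)}{\ell}}$. -/
open scoped Classical

/-!
Counting the pairs `(d, d') ∈ D × D` by their quotient `d d'⁻¹` gives `k² = k + (v - 1) λ`;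
counting only the pairs whose quotient lies in `H`, i.e. the pairs in a common coset, gives
`∑ kᵢ² = k + (n - 1) λ`. Together with `∑ kᵢ = k` this makes the variance of the intersection
numbers `∑ (kᵢ - k/ℓ)² = (k - λ)(ℓ - 1)/ℓ`, and a single term is bounded by the whole sum.
-/

open Finset

section DifferenceSet

variable {G : Type*} [CommGroup G]

def IsDifferenceSet (D : Finset G) (lam : ℕ) : Prop :=
  ∀ w : G, w ≠ 1 → #(D ∩ D.image (· * w)) = lam

theorem card_filter_mul_inv_eq (D : Finset G) (w : G) :
    #((D ×ˢ D).filter (fun p => p.1 * p.2⁻¹ = w)) = #(D ∩ D.image (· * w)) := by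
  refine card_nbij' Prod.fst (fun d => (d, w⁻¹ * d)) ?_ ?_ ?_ fun _ _ => rfl
  · rintro ⟨a, b⟩ hp
    simp only [coe_filter, mem_product, Set.mem_ofPred_eq] at hp
    obtain ⟨⟨ha, hb⟩, rfl⟩ := hp
    simp only [coe_inter, coe_image, Set.mem_inter_iff, mem_coe, Set.mem_image]
    exact ⟨ha, b, hb, mul_inv_cancel_comm_assoc b a⟩
  · intro d hd
    simp only [coe_inter, coe_image, Set.mem_inter_iff, mem_coe, Set.mem_image] at hd
    obtain ⟨hd, b, hb, rfl⟩ := hd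
    simp only [coe_filter, mem_product, Set.mem_ofPred_eq]
    exact ⟨⟨hd, by simpa [mul_comm b w] using hb⟩, by group⟩
  · rintro ⟨a, b⟩ hp
    simp only [coe_filter, mem_product, Set.mem_ofPred_eq] at hp
    obtain ⟨-, rfl⟩ := hp
    simp only [Prod.mk.injEq, true_and]
    group

theorem card_filter_mul_inv_mem (D S : Finset G) :
    #((D ×ˢ D).filter (fun p => p.1 * p.2⁻¹ ∈ S)) = ∑ w ∈ S, #(D ∩ D.image (· * w)) := by
  rw [card_eq_sum_card_fiberwise (f := fun p : G × G => p.1 * p.2⁻¹) (t := S)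
    (s := (D ×ˢ D).filter (fun p => p.1 * p.2⁻¹ ∈ S)) (fun p hp => (mem_filter.1 hp).2)]
  refine sum_congr rfl fun w hw => ?_
  rw [filter_filter, ← card_filter_mul_inv_eq]
  congr 1
  exact filter_congr fun p _ => ⟨And.right, fun h => ⟨h ▸ hw, h⟩⟩

theorem IsDifferenceSet.card_filter_mul_inv_mem {D : Finset G} {lam : ℕ}
    (hD : IsDifferenceSet D lam) {S : Finset G} (hS : 1 ∈ S) :
    #((D ×ˢ D).filter (fun p => p.1 * p.2⁻¹ ∈ S)) = #D + (#S - 1) * lam := by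
  rw [_root_.card_filter_mul_inv_mem, ← add_sum_erase _ _ hS,
    sum_congr rfl fun w hw => hD w (ne_of_mem_erase hw), sum_const, card_erase_of_mem hS,
    smul_eq_mul]
  simp

end DifferenceSet

theorem sum_card_filter_sq {α ι : Type*} [Fintype ι] [DecidableEq ι] (D : Finset α) (f : α → ι) :
    ∑ j, #(D.filter (f · = j)) ^ 2 = #((D ×ˢ D).filter (fun p => f p.1 = f p.2)) := by
  rw [card_eq_sum_card_fiberwise (f := fun p : α × α => f p.2) (t := univ)
    (fun _ _ => mem_univ _)]
  refine sum_congr rfl fun j _ => ?_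
  rw [sq, ← card_product, filter_filter]
  congr 1
  ext ⟨a, b⟩
  simp only [mem_product, mem_filter]
  grind

theorem Subgroup.exists_index_of_existsUnique {G ι : Type*} [Group G] {H : Subgroup G}
    {g : ι → G} (hg : ∀ a : G, ∃! i : ι, a * (g i)⁻¹ ∈ H) :
    ∃ f : G → ι, (∀ a j, a * (g j)⁻¹ ∈ H ↔ f a = j) ∧ ∀ a b, a * b⁻¹ ∈ H ↔ f a = f b := by
  choose f hf huniq using hg
  have hmem : ∀ a j, a * (g j)⁻¹ ∈ H ↔ f a = j :=
    fun a j => ⟨fun h => (huniq a j h).symm, fun h => h ▸ hf a⟩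
  refine ⟨f, hmem, fun a b => ⟨fun h => ?_, fun h => ?_⟩⟩
  · rw [← hmem]
    simpa [mul_assoc] using H.mul_mem h (hf b)
  · have := H.mul_mem (hf a) (H.inv_mem ((hmem b (f a)).2 h.symm))
    simpa [mul_assoc] using this

theorem abs_sub_mean_le_sqrt {ι : Type*} [Fintype ι] (x : ι → ℝ) (i : ι) :
    |x i - (∑ j, x j) / Fintype.card ι|
      ≤ √(∑ j, x j ^ 2 - (∑ j, x j) ^ 2 / Fintype.card ι) := by
  set m := (∑ j, x j) / Fintype.card ι
  have hcard : (Fintype.card ι : ℝ) ≠ 0 := Nat.cast_ne_zero.2 (Fintype.card_pos_iff.2 ⟨i⟩).ne'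
  have hvar : ∑ j, (x j - m) ^ 2 = ∑ j, x j ^ 2 - (∑ j, x j) ^ 2 / Fintype.card ι := by
    simp only [sub_sq, sum_add_distrib, sum_sub_distrib, ← sum_mul, ← mul_sum, sum_const,
      card_univ, nsmul_eq_mul, m]
    field_simp
    ring
  apply Real.abs_le_sqrt
  rw [← hvar]
  exact single_le_sum (f := fun j => (x j - m) ^ 2) (fun j _ => sq_nonneg _) (mem_univ i)

theorem abs_sub_div_le_sqrt_of_sum_sq {ℓ : ℕ} (x : Fin ℓ → ℕ) {k lam n : ℕ} (hn : 1 ≤ n)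
    (hsum : ∑ j, x j = k) (hsq : ∑ j, x j ^ 2 = k + (n - 1) * lam)
    (hk : k * k = k + (n * ℓ - 1) * lam) (i : Fin ℓ) :
    |(x i : ℝ) - k / ℓ| ≤ √((k - lam) * (ℓ - 1) / ℓ) := by
  have hℓ : (ℓ : ℝ) ≠ 0 := Nat.cast_ne_zero.2 i.pos.ne'
  have hsumR : ∑ j, (x j : ℝ) = k := by exact_mod_cast hsum
  have hsqR : ∑ j, (x j : ℝ) ^ 2 = k + (n - 1) * lam := by
    rw [← Nat.cast_one, ← Nat.cast_sub hn]
    exact_mod_cast hsq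
  have hkR : (k : ℝ) * k = k + (n * ℓ - 1) * lam := by
    rw [← Nat.cast_mul, ← Nat.cast_mul, ← Nat.cast_one, ← Nat.cast_sub (one_le_mul hn i.pos)]
    exact_mod_cast hk
  convert abs_sub_mean_le_sqrt (fun j => (x j : ℝ)) i using 3 <;>
    simp only [hsumR, hsqR, Fintype.card_fin]
  field_simp
  linear_combination hkR

theorem stmt_9_general {G : Type*} [CommGroup G] [Fintype G] (v k lam n ℓ : ℕ)
    (D : Finset G) (H : Subgroup G)
    (hv : Fintype.card G = v) (hvnl : v = n * ℓ) (hk : D.card = k)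
    (hDS : ∀ w : G, w ≠ 1 → (D ∩ D.image (· * w)).card = lam)
    (hn : Nat.card H = n)
    (g : Fin ℓ → G)
    (hreps : ∀ a : G, ∃! i : Fin ℓ, a * (g i)⁻¹ ∈ H) :
    ∀ i : Fin ℓ,
      (k : ℝ) / ℓ - Real.sqrt (((k : ℝ) - lam) * ((ℓ : ℝ) - 1) / ℓ)
        ≤ ((D.filter (fun d => d * (g i)⁻¹ ∈ H)).card : ℝ) ∧
      ((D.filter (fun d => d * (g i)⁻¹ ∈ H)).card : ℝ)
        ≤ (k : ℝ) / ℓ + Real.sqrt (((k : ℝ) - lam) * ((ℓ : ℝ) - 1) / ℓ) := by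
  intro i
  obtain ⟨f, hfg, hfH⟩ := Subgroup.exists_index_of_existsUnique hreps
  have hH : #(univ.filter (· ∈ H)) = n := by
    rw [← hn, Nat.card_eq_fintype_card, Fintype.card_subtype]
  have hsq : ∑ j, #(D.filter (f · = j)) ^ 2 = k + (n - 1) * lam := by
    rw [sum_card_filter_sq, ← hk, ← hH, ← IsDifferenceSet.card_filter_mul_inv_mem hDS (by simp)]
    simp only [mem_filter, mem_univ, true_and, hfH]
  have hkk : k * k = k + (n * ℓ - 1) * lam := by
    rw [← hvnl, ← hv, ← card_univ, ← hk, ← card_product,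
      ← IsDifferenceSet.card_filter_mul_inv_mem hDS (mem_univ 1)]
    simp
  have hbound := abs_le.1 <| abs_sub_div_le_sqrt_of_sum_sq (fun j => #(D.filter (f · = j)))
    (hn ▸ Nat.card_pos) (hk ▸ (card_eq_sum_card_fiberwise fun _ _ => mem_univ _).symm) hsq hkk i
  rw [filter_congr fun d _ => hfg d i]
  constructor <;> linarith [hbound.1, hbound.2]

theorem stmt_9 {G : Type*} [CommGroup G] [Fintype G] (v k lam n ℓ : ℕ)
    (D : Finset G) (H : Subgroup G)
    (hv : Fintype.card G = v) (hvnl : v = n * ℓ) (hk : D.card = k)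
    (hDS : ∀ w : G, w ≠ 1 → (D ∩ D.image (· * w)).card = lam)
    (hn : Nat.card H = n) (hℓ : H.index = ℓ)
    (g : Fin ℓ → G)
    (hreps : ∀ a : G, ∃! i : Fin ℓ, a * (g i)⁻¹ ∈ H) :
    ∀ i : Fin ℓ,
      (k : ℝ) / ℓ - Real.sqrt (((k : ℝ) - lam) * ((ℓ : ℝ) - 1) / ℓ)
        ≤ ((D.filter (fun d => d * (g i)⁻¹ ∈ H)).card : ℝ) ∧
      ((D.filter (fun d => d * (g i)⁻¹ ∈ H)).card : ℝ)
        ≤ (k : ℝ) / ℓ + Real.sqrt (((k : ℝ) - lam) * ((ℓ : ℝ) - 1) / ℓ) :=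
  stmt_9_general v k lam n ℓ D H hv hvnl hk hDS hn g hreps
end

section
/- Let $G$ be a finite abelian group of even order $v$ and let $D$ be a $(v,k,\lambda)$ difference set in $G$. Then $k - \lambda$ is a perfect square. -/
open scoped Classical
open Finset


lemma exists_hom2 {G : Type*} [CommGroup G] [Fintype G] (hveven : Even (Fintype.card G)) :
    ∃ φ : G →* Multiplicative (ZMod 2), Function.Surjective φ := by
  obtain ⟨ι, _, n, hn1, ⟨e⟩⟩ := CommGroup.equiv_prod_multiplicative_zmod_of_finite G
  haveI : ∀ i, NeZero (n i) := fun i => ⟨by have := hn1 i; omega⟩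
  have hcard : Fintype.card G = ∏ i, n i := by
    rw [Fintype.card_congr e.toEquiv, Fintype.card_pi]
    simp [ZMod.card]
  have h2 : (2 : ℕ) ∣ ∏ i, n i := by
    rw [← hcard]; exact hveven.two_dvd
  obtain ⟨i, -, hi⟩ := Prime.exists_mem_finset_dvd Nat.prime_two.prime h2
  let ψ := ZMod.castHom hi (ZMod 2)
  have hψ : Function.Surjective ψ := ZMod.ringHom_surjective _
  refine ⟨((AddMonoidHom.toMultiplicative ψ.toAddMonoidHom).comp
      (Pi.evalMonoidHom (fun j => Multiplicative (ZMod (n j))) i)).comp e.toMonoidHom, ?_⟩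
  intro y
  obtain ⟨a, ha⟩ := hψ y.toAdd
  refine ⟨e.symm (Function.update 1 i (Multiplicative.ofAdd a)), ?_⟩
  simp [Function.update_self, ha]


theorem stmt_10 {G : Type*} [CommGroup G] [Fintype G] (v k lam : ℕ)
    (D : Finset G)
    (hv : Fintype.card G = v) (hveven : Even v) (hk : D.card = k)
    (hDS : ∀ w : G, w ≠ 1 → (D ∩ D.image (· * w)).card = lam) :
    ∃ m : ℕ, (k : ℤ) - lam = (m : ℤ) ^ 2 := by
  classical
  obtain ⟨φ, hφ⟩ := exists_hom2 (hv ▸ hveven)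
  -- fibers of the difference map
  have hPlam : ∀ w : G, w ≠ 1 →
      ((D ×ˢ D).filter (fun p => p.1 * p.2⁻¹ = w)).card = lam := by
    intro w hw
    rw [← hDS w hw]
    apply Finset.card_bij' (fun p _ => p.1) (fun x _ => (x, x * w⁻¹))
    · rintro ⟨d, e⟩ hp
      simp only [mem_filter, mem_product] at hp
      obtain ⟨⟨hd, he⟩, hde⟩ := hp
      simp only [mem_inter, mem_image]
      refine ⟨hd, ⟨e, he, ?_⟩⟩
      rw [← hde, mul_comm d e⁻¹]
      exact mul_inv_cancel_left e d
    · intro x hx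
      simp only [mem_inter, mem_image] at hx
      obtain ⟨hxD, e, heD, he⟩ := hx
      have h1 : x * w⁻¹ = e := by rw [← he]; exact mul_inv_cancel_right e w
      simp only [mem_filter, mem_product]
      refine ⟨⟨hxD, by rw [h1]; exact heD⟩, ?_⟩
      rw [h1, ← he, mul_comm e w]
      exact mul_inv_cancel_right w e
    · rintro ⟨d, e⟩ hp
      simp only [mem_filter, mem_product] at hp
      have : d * w⁻¹ = e := by
        rw [← hp.2, mul_inv_rev, inv_inv, mul_comm e d⁻¹]
        exact mul_inv_cancel_left d e
      simp [this]
    · intro x hx; rfl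
  have hP1 : ((D ×ˢ D).filter (fun p => p.1 * p.2⁻¹ = 1)).card = k := by
    have hdiag : (D ×ˢ D).filter (fun p => p.1 * p.2⁻¹ = 1) = D.diag := by
      ext ⟨d, e⟩
      simp only [mem_filter, mem_product, mem_diag, mul_inv_eq_one]
      constructor
      · rintro ⟨⟨h1, h2⟩, h3⟩; exact ⟨h1, h3⟩
      · rintro ⟨h1, rfl⟩; exact ⟨⟨h1, h1⟩, rfl⟩
    rw [hdiag, Finset.diag_card, hk]
  have hv1 : 1 ≤ v := by rw [← hv]; exact Fintype.card_pos
  -- first count : k*k = k + (v-1)*lam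
  have hA : k * k = k + (v - 1) * lam := by
    have h1 : (D ×ˢ D).card =
        ∑ w : G, ((D ×ˢ D).filter (fun p => p.1 * p.2⁻¹ = w)).card :=
      Finset.card_eq_sum_card_fiberwise (fun p _ => mem_univ _)
    rw [card_product, hk] at h1
    rw [h1, ← Finset.sum_erase_add _ _ (mem_univ (1 : G)), hP1,
      Finset.sum_congr rfl (fun w hw => hPlam w (Finset.ne_of_mem_erase hw)),
      Finset.sum_const, smul_eq_mul, Finset.card_erase_of_mem (mem_univ _),
      Finset.card_univ, hv, add_comm]
  -- the kernel as a finset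
  set W : Finset G := Finset.univ.filter (fun w => w ∈ φ.ker) with hW
  have hWmem : ∀ x : G, x ∈ W ↔ φ x = 1 := by
    intro x; simp [hW, MonoidHom.mem_ker]
  have hWcard : 2 * W.card = v := by
    have h1 : Nat.card G = Nat.card (G ⧸ φ.ker) * Nat.card φ.ker :=
      Subgroup.card_eq_card_quotient_mul_card_subgroup _
    have h2 : Nat.card (G ⧸ φ.ker) = 2 := by
      rw [Nat.card_congr (QuotientGroup.quotientKerEquivOfSurjective φ hφ).toEquiv]
      simp [Nat.card_eq_fintype_card, ZMod.card]
    have h3 : Nat.card φ.ker = W.card := by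
      rw [Nat.card_eq_fintype_card, Fintype.card_subtype]
    rw [h2, h3] at h1
    rw [← h1, Nat.card_eq_fintype_card, hv]
  have hW1 : (1 : G) ∈ W := (hWmem 1).mpr (map_one φ)
  have hWpos : 1 ≤ W.card := Finset.card_pos.mpr ⟨1, hW1⟩
  -- second count, kernel side : S = k + (W.card - 1)*lam
  have key : ∀ p : G × G, (φ p.1 = φ p.2) ↔ p.1 * p.2⁻¹ ∈ W := by
    intro p
    rw [hWmem, map_mul, map_inv, mul_inv_eq_one]
  have hB : ((D ×ˢ D).filter (fun p => φ p.1 = φ p.2)).card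
      = k + (W.card - 1) * lam := by
    have h1 : ((D ×ˢ D).filter (fun p => φ p.1 = φ p.2)).card =
        ∑ w ∈ W, (((D ×ˢ D).filter (fun p => φ p.1 = φ p.2)).filter
          (fun p => p.1 * p.2⁻¹ = w)).card :=
      Finset.card_eq_sum_card_fiberwise (fun p hp => (key p).mp (mem_filter.mp hp).2)
    have h2 : ∀ w ∈ W, (((D ×ˢ D).filter (fun p => φ p.1 = φ p.2)).filter
        (fun p => p.1 * p.2⁻¹ = w)).card
        = ((D ×ˢ D).filter (fun p => p.1 * p.2⁻¹ = w)).card := by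
      intro w hw
      congr 1
      rw [Finset.filter_filter]
      apply Finset.filter_congr
      intro p hp
      constructor
      · rintro ⟨-, h⟩; exact h
      · intro h; exact ⟨(key p).mpr (h ▸ hw), h⟩
    rw [h1, Finset.sum_congr rfl h2,
      ← Finset.sum_erase_add _ _ hW1, hP1,
      Finset.sum_congr rfl (fun w hw => hPlam w ?_),
      Finset.sum_const, smul_eq_mul, Finset.card_erase_of_mem hW1, add_comm]
    · intro hcontra
      exact (Finset.mem_erase.mp hw).1 hcontra
  -- second count, coset side
  have hC : ((D ×ˢ D).filter (fun p => φ p.1 = φ p.2)).card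
      = ∑ t : Multiplicative (ZMod 2),
          (D.filter (fun d => φ d = t)).card * (D.filter (fun d => φ d = t)).card := by
    have h1 : ((D ×ˢ D).filter (fun p => φ p.1 = φ p.2)).card =
        ∑ t : Multiplicative (ZMod 2),
          (((D ×ˢ D).filter (fun p => φ p.1 = φ p.2)).filter
            (fun p => φ p.1 = t)).card :=
      Finset.card_eq_sum_card_fiberwise (fun p _ => mem_univ _)
    rw [h1]
    apply Finset.sum_congr rfl
    intro t _
    rw [← Finset.card_product]
    congr 1
    ext ⟨d, e⟩
    simp only [Finset.filter_filter, mem_filter, mem_product]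
    constructor
    · rintro ⟨⟨hd, he⟩, hde, ht⟩
      exact ⟨⟨hd, ht⟩, he, by rw [← hde, ht]⟩
    · rintro ⟨⟨hd, ht⟩, he, ht'⟩
      exact ⟨⟨hd, he⟩, by rw [ht, ht'], ht⟩
  have hD : k = ∑ t : Multiplicative (ZMod 2), (D.filter (fun d => φ d = t)).card := by
    rw [← hk]
    exact Finset.card_eq_sum_card_fiberwise (fun d _ => mem_univ _)
  -- sums over the two elements of ZMod 2
  obtain ⟨a, b, hab, hset⟩ := Nat.card_eq_two_iff.mp
    (show Nat.card (Multiplicative (ZMod 2)) = 2 by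
      simp [Nat.card_eq_fintype_card, ZMod.card])
  have huniv : (univ : Finset (Multiplicative (ZMod 2))) = {a, b} := by
    ext z
    simp only [mem_univ, true_iff, Finset.mem_insert, Finset.mem_singleton]
    have hz : z ∈ ({a, b} : Set _) := hset ▸ Set.mem_univ z
    simpa using hz
  rw [huniv, Finset.sum_pair hab] at hC hD
  set x : ℕ := (D.filter (fun d => φ d = a)).card with hx
  set y : ℕ := (D.filter (fun d => φ d = b)).card with hy
  refine ⟨((x : ℤ) - y).natAbs, ?_⟩
  rw [Int.natCast_natAbs, sq_abs]
  zify [hv1] at hA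
  zify [hWpos] at hB
  zify at hC hD hWcard
  linear_combination 2*hC - 2*hB + hA - ((k:ℤ)+x+y)*hD - (lam:ℤ)*hWcard
end

section
/- Let $D$ be a $(v,k,\lambda)$ difference set in a finite abelian group $G$ of even order $v$, let $H \le G$ be a subgroup of index 2, and let $k_0 = |D \cap H|$, $k_1 = |D| - k_0$. Then $\{k_0, k_1\} = \{(k + \sqrt{k-\lambda})/2, (k - \sqrt{k-\lambda})/2\}$; in particular $k-\lambda$ is a perfect square. -/
open scoped Classical

lemma two_elt_aux {Q : Type*} [Group Q] (h : Nat.card Q = 2) {a b : Q}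
    (ha : a ≠ 1) (hb : b ≠ 1) : a = b := by
  have hfin : Finite Q := Nat.finite_of_card_ne_zero (by omega)
  have := Fintype.ofFinite Q
  by_contra hab
  have hsub : ({1, a, b} : Finset Q) ⊆ Finset.univ := Finset.subset_univ _
  have hcard : ({1, a, b} : Finset Q).card = 3 := by
    rw [Finset.card_insert_of_notMem (by simp [Ne.symm ha, Ne.symm hb]),
        Finset.card_insert_of_notMem (by simp [hab])]
    rfl
  have := Finset.card_le_card hsub
  rw [hcard, Finset.card_univ] at this
  rw [Nat.card_eq_fintype_card] at h
  omega

lemma fiber_card {G : Type*} [CommGroup G] [DecidableEq G] (D : Finset G) (w : G) :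
    ((D ×ˢ D).filter (fun p => p.1 * p.2⁻¹ = w)).card
      = (D ∩ D.image (· * w)).card := by
  apply Finset.card_bij (fun p _ => p.1)
  · intro p hp
    simp only [Finset.mem_filter, Finset.mem_product] at hp
    simp only [Finset.mem_inter, Finset.mem_image]
    refine ⟨hp.1.1, p.2, hp.1.2, ?_⟩
    rw [← hp.2, mul_comm]
    exact inv_mul_cancel_right _ _
  · intro a ha b hb hab
    simp only [Finset.mem_filter, Finset.mem_product] at ha hb
    have h2 : a.2 = b.2 := by
      have h1 : b.1 * a.2⁻¹ = b.1 * b.2⁻¹ := by rw [hb.2, ← hab]; exact ha.2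
      exact inv_injective (mul_left_cancel h1)
    exact Prod.ext hab h2
  · intro x hx
    simp only [Finset.mem_inter, Finset.mem_image] at hx
    obtain ⟨hxD, d, hd, rfl⟩ := hx
    exact ⟨(d * w, d), by simp [Finset.mem_filter, Finset.mem_product, hxD, hd], rfl⟩

lemma sum_card_aux {G : Type*} [CommGroup G] [DecidableEq G] (D : Finset G) (S : Finset G) :
    ((D ×ˢ D).filter (fun p => p.1 * p.2⁻¹ ∈ S)).card
      = ∑ w ∈ S, (D ∩ D.image (· * w)).card := by
  have hfib := Finset.card_eq_sum_card_fiberwise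
      (s := (D ×ˢ D).filter (fun p => p.1 * p.2⁻¹ ∈ S)) (t := S)
      (f := fun p : G × G => p.1 * p.2⁻¹)
      (fun p hp => (Finset.mem_filter.1 hp).2)
  rw [hfib]
  refine Finset.sum_congr rfl fun w hw => ?_
  rw [← fiber_card]
  congr 1
  ext p
  simp only [Finset.mem_filter]
  constructor
  · rintro ⟨⟨hp, _⟩, h⟩; exact ⟨hp, h⟩
  · rintro ⟨hp, h⟩; exact ⟨⟨hp, h ▸ hw⟩, h⟩

lemma arith_aux (k0 k1 k lam c : ℕ) (h : k0 = k1 + c) (hkk : k0 + k1 = k)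
    (e3 : 2 * (k0 * k0 + k1 * k1) + lam = k + k * k) : c * c + lam = k := by
  subst h
  nlinarith [e3, hkk]

theorem stmt_11 {G : Type*} [CommGroup G] [Fintype G] (v k lam : ℕ)
    (D : Finset G) (H : Subgroup G)
    (hv : Fintype.card G = v) (hk : D.card = k)
    (hDS : ∀ w : G, w ≠ 1 → (D ∩ D.image (· * w)).card = lam)
    (hH : H.index = 2)
    (k0 k1 : ℕ)
    (hk0 : k0 = (D.filter (fun d => d ∈ H)).card)
    (hk1 : k1 = k - k0) :
    ∃ m : ℕ, k = lam + m * m ∧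
      ((2 * k0 = k + m ∧ 2 * k1 = k - m) ∨
       (2 * k1 = k + m ∧ 2 * k0 = k - m)) := by
  classical
  set A := D.filter (fun d => d ∈ H) with hA
  set B := D.filter (fun d => d ∉ H) with hB
  have hAB : A.card + B.card = k := by
    rw [hA, hB, Finset.card_filter_add_card_filter_not, hk]
  have hk0A : k0 = A.card := hk0
  have hk1B : k1 = B.card := by omega
  -- membership criterion
  have hmem : ∀ x d : G, x * d⁻¹ ∈ H ↔ (x ∈ H ↔ d ∈ H) := by
    intro x d
    constructor
    · intro h
      constructor
      · intro hx
        have : (x * d⁻¹)⁻¹ * x ∈ H := H.mul_mem (H.inv_mem h) hx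
        simpa [mul_assoc, mul_comm, mul_left_comm] using this
      · intro hd
        have : (x * d⁻¹) * d ∈ H := H.mul_mem h hd
        simpa [mul_assoc] using this
    · intro h
      by_cases hx : x ∈ H
      · exact H.mul_mem hx (H.inv_mem (h.1 hx))
      · have hd : d ∉ H := fun hd => hx (h.2 hd)
        have hq : Nat.card (G ⧸ H) = 2 := hH
        have hx' : (QuotientGroup.mk x : G ⧸ H) ≠ 1 := by
          simpa [QuotientGroup.eq_one_iff] using hx
        have hd' : (QuotientGroup.mk d : G ⧸ H) ≠ 1 := by
          simpa [QuotientGroup.eq_one_iff] using hd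
        have := two_elt_aux hq hx' hd'
        have : (QuotientGroup.mk (x * d⁻¹) : G ⧸ H) = 1 := by
          rw [QuotientGroup.mk_mul, QuotientGroup.mk_inv, this]
          simp
        exact (QuotientGroup.eq_one_iff _).1 this
  -- split of the filtered product
  have hsplit : (D ×ˢ D).filter (fun p => p.1 * p.2⁻¹ ∈ H)
      = (A ×ˢ A) ∪ (B ×ˢ B) := by
    ext p
    simp only [Finset.mem_filter, Finset.mem_product, Finset.mem_union, hA, hB]
    rw [hmem p.1 p.2]
    by_cases h1 : p.1 ∈ H <;> by_cases h2 : p.2 ∈ H <;> simp [h1, h2]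
  have hdisj : Disjoint (A ×ˢ A) (B ×ˢ B) := by
    rw [Finset.disjoint_left]
    intro p hp hp'
    simp only [Finset.mem_product, hA, hB, Finset.mem_filter] at hp hp'
    exact hp'.1.2 hp.1.2
  set HF : Finset G := Finset.univ.filter (fun x => x ∈ H) with hHF
  set n := HF.card with hn
  have h1HF : (1 : G) ∈ HF := by simp [hHF, H.one_mem]
  have hn1 : 1 ≤ n := Finset.card_pos.2 ⟨1, h1HF⟩
  -- first count
  have eq1 : k0 * k0 + k1 * k1 = k + lam * (n - 1) := by
    have hLHS : ((D ×ˢ D).filter (fun p => p.1 * p.2⁻¹ ∈ H)).card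
        = k0 * k0 + k1 * k1 := by
      rw [hsplit, Finset.card_union_of_disjoint hdisj, Finset.card_product,
          Finset.card_product, hk0A, hk1B]
    have hRHS : ((D ×ˢ D).filter (fun p => p.1 * p.2⁻¹ ∈ HF)).card
        = k + lam * (n - 1) := by
      rw [sum_card_aux, ← Finset.add_sum_erase HF _ h1HF]
      have he1 : (D ∩ D.image (· * 1)).card = k := by
        simp [hk]
      rw [he1]
      congr 1
      rw [Finset.sum_congr rfl (fun w hw => hDS w (Finset.ne_of_mem_erase hw)),
          Finset.sum_const, Finset.card_erase_of_mem h1HF, smul_eq_mul, mul_comm]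
    rw [← hLHS, ← hRHS]
    congr 1
    ext p
    simp [hHF]
  -- second count
  have eq2 : k * k = k + lam * (v - 1) := by
    have hLHS : ((D ×ˢ D).filter (fun p => p.1 * p.2⁻¹ ∈ (Finset.univ : Finset G))).card
        = k * k := by
      simp [Finset.card_product, hk]
    have hRHS : ((D ×ˢ D).filter (fun p => p.1 * p.2⁻¹ ∈ (Finset.univ : Finset G))).card
        = k + lam * (v - 1) := by
      rw [sum_card_aux, ← Finset.add_sum_erase Finset.univ _ (Finset.mem_univ 1)]
      have he1 : (D ∩ D.image (· * 1)).card = k := by simp [hk]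
      rw [he1]
      congr 1
      rw [Finset.sum_congr rfl (fun w hw => hDS w (Finset.ne_of_mem_erase hw)),
          Finset.sum_const, Finset.card_erase_of_mem (Finset.mem_univ 1), smul_eq_mul,
          Finset.card_univ, hv, mul_comm]
    omega
  -- v = 2 * n
  have hv2 : v = 2 * n := by
    have hcardH : Nat.card H = n := by
      rw [Nat.card_eq_fintype_card, hn, hHF, ← Fintype.card_subtype]
    have := H.index_mul_card
    rw [hH, hcardH, Nat.card_eq_fintype_card, hv] at this
    omega
  -- arithmetic conclusion
  have hkk : k0 + k1 = k := by
    have : k0 ≤ k := by rw [hk0A, ← hk]; exact Finset.card_le_card (Finset.filter_subset _ _)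
    omega
  -- derive (k0-k1)^2 + lam = k
  have key : ∀ m : ℕ, (k0 ≥ k1 ∧ m = k0 - k1 ∨ k1 ≥ k0 ∧ m = k1 - k0) →
      m * m + lam = k := by
    intro m hm
    have e1 : k0 * k0 + k1 * k1 + lam = k + lam * n := by
      have : lam * (n - 1) + lam = lam * n := by
        obtain ⟨c, hc⟩ := Nat.exists_eq_add_of_le hn1
        rw [hc, Nat.add_sub_cancel_left]; ring
      omega
    have e2 : k * k + lam = k + lam * (2 * n) := by
      have hv1 : 1 ≤ v := by omega
      have : lam * (v - 1) + lam = lam * v := by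
        obtain ⟨c, hc⟩ := Nat.exists_eq_add_of_le hv1
        rw [hc, Nat.add_sub_cancel_left]; ring
      rw [← hv2]; omega
    -- 2*(k0²+k1²) + lam = k + k²
    have h2n : lam * (2 * n) = 2 * (lam * n) := by ring
    have e3 : 2 * (k0 * k0 + k1 * k1) + lam = k + k * k := by omega
    rcases hm with ⟨hge, rfl⟩ | ⟨hge, rfl⟩
    · obtain ⟨c, hc⟩ := Nat.exists_eq_add_of_le hge
      have hm' : k0 - k1 = c := by omega
      rw [hm']
      exact arith_aux k0 k1 k lam c hc hkk e3
    · obtain ⟨c, hc⟩ := Nat.exists_eq_add_of_le hge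
      have hm' : k1 - k0 = c := by omega
      rw [hm']
      exact arith_aux k1 k0 k lam c hc (by omega) (by omega)
  by_cases hc : k0 ≥ k1
  · refine ⟨k0 - k1, ?_, Or.inl ⟨?_, ?_⟩⟩
    · have := key (k0 - k1) (Or.inl ⟨hc, rfl⟩); omega
    · omega
    · omega
  · refine ⟨k1 - k0, ?_, Or.inr ⟨?_, ?_⟩⟩
    · have := key (k1 - k0) (Or.inr ⟨by omega, rfl⟩); omega
    · omega
    · omega
end

section
/- Let $a$ be a positive integer. The equation $x^2 + xy + y^2 = a$ has integer solutions if and only if for every prime $p$ dividing $a$ with $p \ne 3$ and $p \not\equiv 1 \pmod 6$, the exact power of $p$ dividing $a$ is even. -/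
/-!
The values of `x² + xy + y²` are the norms of the Eisenstein integers, so they form a multiplicative
monoid. It contains `3 = 1 + 1 + 1`, squares `p² = p² + p·0 + 0²`, and every prime `p ≡ 1 (mod 3)`:
such a `p` has a cube root of unity `t ≢ 1 (mod p)`, and Thue's pigeonhole lemma gives `x ≡ t y`
with `|x|, |y| < √p`, whence `p ∣ x² + xy + y² < 3p`. Conversely, for `p ≡ 2 (mod 3)` the polynomial
`t² + t + 1` has no root mod `p` (a root would have order `3 ∣ p - 1`), so `p ∣ x² + xy + y²` forces
`p ∣ x, y`; dividing out `p²` shows that `p` occurs to an even power.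
-/

def eisensteinNorms : Submonoid ℤ where
  carrier := {n | ∃ x y : ℤ, x ^ 2 + x * y + y ^ 2 = n}
  one_mem' := ⟨1, 0, by ring⟩
  -- `N(x - yω) N(u - vω) = N((xu - yv) - (xv + yu + yv)ω)` in `ℤ[ω]`
  mul_mem' := by
    rintro _ _ ⟨x, y, rfl⟩ ⟨u, v, rfl⟩
    exact ⟨x * u - y * v, x * v + y * u + y * v, by ring⟩

theorem sq_add_mul_add_sq_pos {x y : ℤ} (h : x ≠ 0 ∨ y ≠ 0) : 0 < x ^ 2 + x * y + y ^ 2 := by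
  rcases h with h | h
  · nlinarith [sq_pos_of_ne_zero h, sq_nonneg (x + 2 * y)]
  · nlinarith [sq_pos_of_ne_zero h, sq_nonneg (2 * x + y)]

namespace ZMod

variable {p : ℕ} [Fact p.Prime]

theorem sq_add_add_one_ne_zero (hp : p % 3 = 2) (t : ZMod p) : t ^ 2 + t + 1 ≠ 0 := by
  intro ht
  have ht1 : t ≠ 1 := by
    rintro rfl
    have h3 : ((3 : ℕ) : ZMod p) = 0 := by push_cast; linear_combination ht
    rw [natCast_eq_zero_iff, Nat.dvd_prime Nat.prime_three] at h3
    have := (Fact.out : p.Prime).one_lt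
    omega
  have ht3 : t ^ 3 = 1 := by linear_combination (t - 1) * ht
  have ht0 : t ≠ 0 := by rintro rfl; simp at ht3
  have := orderOf_dvd_card_sub_one ht0
  rw [orderOf_eq_prime ht3 ht1] at this
  omega

theorem exists_sq_add_add_one_eq_zero (hp : p % 3 = 1) : ∃ t : ZMod p, t ^ 2 + t + 1 = 0 := by
  have h3 : 3 ∣ Fintype.card (ZMod p)ˣ := by
    rw [card_units_eq_totient, Nat.totient_prime Fact.out]; omega
  obtain ⟨u, hu⟩ := exists_prime_orderOf_dvd_card 3 h3
  have hζ : IsPrimitiveRoot (u : ZMod p) 3 := IsPrimitiveRoot.coe_units_iff.2 (hu ▸ .orderOf u)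
  have hsum := hζ.geom_sum_eq_zero (by norm_num)
  simp only [Finset.sum_range_succ, Finset.sum_range_zero, pow_zero, pow_one, zero_add] at hsum
  exact ⟨u, by linear_combination hsum⟩

theorem exists_abs_le_sqrt_intCast_eq_mul {m : ℕ} [NeZero m] (t : ZMod m) :
    ∃ x y : ℤ, (x ≠ 0 ∨ y ≠ 0) ∧ |x| ≤ m.sqrt ∧ |y| ≤ m.sqrt ∧ (x : ZMod m) = t * y := by
  classical
  set s := m.sqrt
  have hcard : (Finset.univ : Finset (ZMod m)).card <
      (Finset.range (s + 1) ×ˢ Finset.range (s + 1)).card := by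
    rw [Finset.card_univ, card, Finset.card_product, Finset.card_range]
    exact Nat.lt_succ_sqrt m
  obtain ⟨c, hc, d, hd, hcd, heq⟩ := Finset.exists_ne_map_eq_of_card_lt_of_maps_to hcard
    (f := fun c : ℕ × ℕ => (c.1 : ZMod m) - t * c.2) (fun _ _ => Finset.mem_univ _)
  simp only [Finset.mem_product, Finset.mem_range] at hc hd
  refine ⟨(c.1 : ℤ) - d.1, (c.2 : ℤ) - d.2, ?_, ?_, ?_, ?_⟩
  · by_contra! h
    exact hcd (Prod.ext (by omega) (by omega))
  · rw [abs_le]; omega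
  · rw [abs_le]; omega
  · push_cast; linear_combination heq

end ZMod

theorem Int.dvd_and_dvd_of_dvd_sq_add_mul_add_sq {p : ℕ} [Fact p.Prime] (hp : p % 3 = 2) {x y : ℤ}
    (h : (p : ℤ) ∣ x ^ 2 + x * y + y ^ 2) : (p : ℤ) ∣ x ∧ (p : ℤ) ∣ y := by
  simp only [← ZMod.intCast_zmod_eq_zero_iff_dvd] at h ⊢
  push_cast at h
  have hy : (y : ZMod p) = 0 := by
    by_contra hy
    refine ZMod.sq_add_add_one_ne_zero hp (x / y) ?_
    field_simp
    linear_combination h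
  exact ⟨by simpa [hy] using h, hy⟩

theorem natCast_mem_eisensteinNorms_of_mod_three_eq_one {p : ℕ} (hp : p.Prime) (hp3 : p % 3 = 1) :
    (p : ℤ) ∈ eisensteinNorms := by
  have := Fact.mk hp
  obtain ⟨t, ht⟩ := ZMod.exists_sq_add_add_one_eq_zero hp3
  obtain ⟨x, y, hxy, hx, hy, hmod⟩ := ZMod.exists_abs_le_sqrt_intCast_eq_mul t
  have hsqrt : (p.sqrt : ℤ) ^ 2 < p := by
    have hne : p.sqrt ^ 2 ≠ p := fun h => hp.prime.not_isSquare ⟨_, by rw [← h, sq]⟩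
    exact_mod_cast (Nat.sqrt_le' p).lt_of_ne hne
  have hpos := sq_add_mul_add_sq_pos hxy
  have hlt : x ^ 2 + x * y + y ^ 2 < 3 * p := by
    have := abs_le.1 hx; have := abs_le.1 hy
    nlinarith
  obtain ⟨k, hk⟩ : (p : ℤ) ∣ x ^ 2 + x * y + y ^ 2 := by
    rw [← ZMod.intCast_zmod_eq_zero_iff_dvd]
    push_cast
    linear_combination (y : ZMod p) ^ 2 * ht + (x - t * y + 2 * t * y + y) * hmod
  have hk12 : k = 1 ∨ k = 2 := by
    have hp0 : (0 : ℤ) < p := by exact_mod_cast hp.pos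
    rw [hk] at hpos hlt
    have : 0 < k := pos_of_mul_pos_right hpos hp0.le
    have : k < 3 := lt_of_mul_lt_mul_left (by linarith) hp0.le
    omega
  rcases hk12 with rfl | rfl
  · exact ⟨x, y, by rw [hk, mul_one]⟩
  -- `2 % 3 = 2`, so `x² + xy + y² = 2p` would force `2 ∣ x, y` and hence `4 ∣ 2p`.
  obtain ⟨⟨x', rfl⟩, ⟨y', rfl⟩⟩ :=
    Int.dvd_and_dvd_of_dvd_sq_add_mul_add_sq (p := 2) rfl ⟨p, by rw [hk]; push_cast; ring⟩
  push_cast at hk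
  have h2p : ((2 : ℕ) : ℤ) ∣ p := ⟨x' ^ 2 + x' * y' + y' ^ 2, by push_cast; linarith⟩
  have := (Nat.prime_dvd_prime_iff_eq Nat.prime_two hp).1 (Int.natCast_dvd_natCast.1 h2p)
  omega

theorem even_factorization_of_natCast_mem_eisensteinNorms {p : ℕ} (hp : p.Prime) (hp3 : p % 3 = 2)
    {n : ℕ} (hn : (n : ℤ) ∈ eisensteinNorms) : Even (n.factorization p) := by
  have := Fact.mk hp
  induction n using Nat.strong_induction_on with
  | _ n ih =>
  by_cases hpn : p ∣ n
  swap
  · simp [Nat.factorization_eq_zero_of_not_dvd hpn]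
  rcases eq_or_ne n 0 with rfl | hn0
  · simp
  obtain ⟨x, y, hxy⟩ := hn
  obtain ⟨⟨x', rfl⟩, ⟨y', rfl⟩⟩ :=
    Int.dvd_and_dvd_of_dvd_sq_add_mul_add_sq hp3 (hxy ▸ Int.natCast_dvd_natCast.2 hpn)
  obtain ⟨m, rfl⟩ : p ^ 2 ∣ n := by
    refine Int.natCast_dvd_natCast.1 ⟨x' ^ 2 + x' * y' + y' ^ 2, ?_⟩
    rw [← hxy]; push_cast; ring
  have hm0 : m ≠ 0 := right_ne_zero_of_mul hn0
  have hm : (m : ℤ) ∈ eisensteinNorms := by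
    refine ⟨x', y', mul_left_cancel₀ (pow_ne_zero 2 (Int.natCast_ne_zero.2 hp.ne_zero)) ?_⟩
    push_cast at hxy
    linear_combination hxy
  have hlt : m < p ^ 2 * m :=
    lt_mul_left (Nat.pos_of_ne_zero hm0) (Nat.one_lt_pow two_ne_zero hp.one_lt)
  rw [Nat.factorization_mul (pow_ne_zero 2 hp.ne_zero) hm0, Finsupp.add_apply,
    hp.factorization_pow, Finsupp.single_eq_same]
  exact even_two.add (ih m hlt hm)

theorem natCast_mem_eisensteinNorms_of_even_factorization {n : ℕ}
    (h : ∀ p : ℕ, p.Prime → p ∣ n → p ≠ 3 → p % 6 ≠ 1 → Even (n.factorization p)) :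
    (n : ℤ) ∈ eisensteinNorms := by
  rcases eq_or_ne n 0 with rfl | hn0
  · exact ⟨0, 0, by simp⟩
  rw [← Nat.prod_factorization_pow_eq_self hn0, Nat.cast_finsuppProd]
  refine Submonoid.prod_mem _ fun p hp => ?_
  rw [Nat.support_factorization] at hp
  have hpp := Nat.prime_of_mem_primeFactors hp
  push_cast
  by_cases hrep : p = 3 ∨ p % 6 = 1
  · refine pow_mem ?_ _
    rcases hrep with rfl | hp6
    · exact ⟨1, 1, by norm_num⟩
    · exact natCast_mem_eisensteinNorms_of_mod_three_eq_one hpp (by omega)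
  · obtain ⟨hp3, hp6⟩ := not_or.1 hrep
    obtain ⟨k, hk⟩ := h p hpp (Nat.dvd_of_mem_primeFactors hp) hp3 hp6
    rw [hk, ← two_mul, pow_mul]
    exact pow_mem (⟨p, 0, by ring⟩ : (p : ℤ) ^ 2 ∈ eisensteinNorms) _

theorem Nat.Prime.mod_three_eq_two {p : ℕ} (hp : p.Prime) (hp3 : p ≠ 3) (hp6 : p % 6 ≠ 1) :
    p % 3 = 2 := by
  rcases hp.eq_two_or_odd with rfl | hodd
  · rfl
  have : ¬ 3 ∣ p := fun h => hp3 ((Nat.prime_dvd_prime_iff_eq Nat.prime_three hp).1 h).symm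
  omega

theorem stmt_12_general (a : ℕ) :
    (∃ x y : ℤ, x ^ 2 + x * y + y ^ 2 = (a : ℤ)) ↔
    (∀ p : ℕ, p.Prime → p ∣ a → p ≠ 3 → p % 6 ≠ 1 →
      Even (a.factorization p)) :=
  ⟨fun h _ hp _ hp3 hp6 => even_factorization_of_natCast_mem_eisensteinNorms hp
    (hp.mod_three_eq_two hp3 hp6) h,
   natCast_mem_eisensteinNorms_of_even_factorization⟩

theorem stmt_12 (a : ℕ) (ha : 0 < a) :
    (∃ x y : ℤ, x ^ 2 + x * y + y ^ 2 = (a : ℤ)) ↔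
    (∀ p : ℕ, p.Prime → p ∣ a → p ≠ 3 → p % 6 ≠ 1 →
      Even (a.factorization p)) :=
  stmt_12_general a
end

section
/- Let $\mathcal{D} = (\mathcal{V}, \mathcal{B}, \mathcal{R})$ be a $(kn+1, k, k-1)$ near-resolvable block design with near-parallel classes $\mathcal{R}$ (each class has $n$ blocks, and each point is absent from exactly one of the $kn+1$ classes). For fixed $1 \le s \le n$, let $\mathcal{R}_s$ be the collection (with multiplicity) of all unions of $s$ pairwise distinct blocks belonging to a common near-parallel class. Then $(\mathcal{V}, \mathcal{R}_s)$ is a $(kn+1, ks, \lambda_s)$ balanced incomplete block design with $\lambda_s = (k-1)\binom{n-1}{s-1} + (kn-k)\binom{n-2}{s-2}$. -/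
open scoped Classical

/-- Binomial coefficient `n.choose m` extended to integer lower index,
zero when `m < 0`. -/
def chooseZ (n : ℕ) (m : ℤ) : ℕ := if m < 0 then 0 else n.choose m.toNat

lemma aux_sup_card {V : Type*} [DecidableEq V] (k : ℕ) (T : Finset (Finset V))
    (hsz : ∀ b ∈ T, b.card = k)
    (hd : ∀ b1 ∈ T, ∀ b2 ∈ T, b1 ≠ b2 → Disjoint b1 b2) :
    (T.sup id).card = k * T.card := by
  rw [Finset.sup_eq_biUnion]
  rw [show (T.biUnion id) = T.biUnion (fun b => b) from rfl]
  rw [Finset.card_biUnion (fun b hb b' hb' h => hd b hb b' hb' h)]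
  rw [Finset.sum_congr rfl (fun b hb => hsz b hb), Finset.sum_const, smul_eq_mul, Nat.mul_comm]

lemma aux_one {α : Type*} [DecidableEq α] (T : Finset α) (b : α) (hb : b ∈ T)
    (s : ℕ) (hs : 1 ≤ s) :
    ((T.powersetCard s).filter (fun S => b ∈ S)).card = (T.card - 1).choose (s - 1) := by
  rw [← Finset.card_erase_of_mem hb, ← Finset.card_powersetCard]
  apply Finset.card_bij (fun S _ => S.erase b)
  · intro S hS
    simp only [Finset.mem_filter, Finset.mem_powersetCard] at hS
    rw [Finset.mem_powersetCard]
    exact ⟨Finset.erase_subset_erase _ hS.1.1, by rw [Finset.card_erase_of_mem hS.2, hS.1.2]⟩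
  · intro S1 h1 S2 h2 h
    simp only [Finset.mem_filter] at h1 h2
    rw [← Finset.insert_erase h1.2, ← Finset.insert_erase h2.2, h]
  · intro S' hS'
    rw [Finset.mem_powersetCard] at hS'
    have hbS' : b ∉ S' := fun h => (Finset.mem_erase.mp (hS'.1 h)).1 rfl
    refine ⟨insert b S', ?_, Finset.erase_insert hbS'⟩
    simp only [Finset.mem_filter, Finset.mem_powersetCard]
    refine ⟨⟨Finset.insert_subset hb (hS'.1.trans (Finset.erase_subset _ _)), ?_⟩,
      Finset.mem_insert_self _ _⟩
    rw [Finset.card_insert_of_notMem hbS', hS'.2]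
    omega

lemma aux_two {α : Type*} [DecidableEq α] (T : Finset α) (b1 b2 : α) (hb1 : b1 ∈ T)
    (hb2 : b2 ∈ T) (hne : b1 ≠ b2) (s : ℕ) (hs : 2 ≤ s) :
    ((T.powersetCard s).filter (fun S => b1 ∈ S ∧ b2 ∈ S)).card
      = (T.card - 2).choose (s - 2) := by
  have h2 : b2 ∈ T.erase b1 := Finset.mem_erase.mpr ⟨hne.symm, hb2⟩
  have haux := aux_one (T.erase b1) b2 h2 (s-1) (by omega)
  rw [Finset.card_erase_of_mem hb1] at haux
  have hcard : (((T.erase b1).powersetCard (s-1)).filter (fun S => b2 ∈ S)).card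
      = (T.card - 2).choose (s-2) := by
    rw [haux]; congr 1 <;> omega
  rw [← hcard]
  apply Finset.card_bij (fun S _ => S.erase b1)
  · intro S hS
    simp only [Finset.mem_filter, Finset.mem_powersetCard] at hS ⊢
    exact ⟨⟨Finset.erase_subset_erase _ hS.1.1,
      by rw [Finset.card_erase_of_mem hS.2.1, hS.1.2]⟩,
      Finset.mem_erase.mpr ⟨hne.symm, hS.2.2⟩⟩
  · intro S1 h1 S2 h2' h
    simp only [Finset.mem_filter] at h1 h2'
    rw [← Finset.insert_erase h1.2.1, ← Finset.insert_erase h2'.2.1, h]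
  · intro S' hS'
    simp only [Finset.mem_filter, Finset.mem_powersetCard] at hS'
    have hbS' : b1 ∉ S' := fun h => (Finset.mem_erase.mp (hS'.1.1 h)).1 rfl
    refine ⟨insert b1 S', ?_, Finset.erase_insert hbS'⟩
    simp only [Finset.mem_filter, Finset.mem_powersetCard]
    exact ⟨⟨Finset.insert_subset hb1 (hS'.1.1.trans (Finset.erase_subset _ _)),
      by rw [Finset.card_insert_of_notMem hbS', hS'.1.2]; omega⟩,
      Finset.mem_insert_self _ _, Finset.mem_insert_of_mem hS'.2⟩

lemma class_count {V : Type*} [DecidableEq V] (k n s : ℕ) (hs1 : 1 ≤ s)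
    (T : Finset (Finset V)) (hTcard : T.card = n)
    (hd : ∀ b1 ∈ T, ∀ b2 ∈ T, b1 ≠ b2 → Disjoint b1 b2)
    (x y : V) (hxy : x ≠ y) :
    ((T.powersetCard s).filter (fun S => x ∈ S.sup id ∧ y ∈ S.sup id)).card
      = (T.filter (fun bl => x ∈ bl ∧ y ∈ bl)).card * (n-1).choose (s-1)
        + (if x ∈ T.sup id ∧ y ∈ T.sup id ∧
              T.filter (fun bl => x ∈ bl ∧ y ∈ bl) = ∅ then 1 else 0)
          * chooseZ (n-2) ((s:ℤ)-2) := by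
  have huniq : ∀ z : V, ∀ b ∈ T, ∀ b' ∈ T, z ∈ b → z ∈ b' → b = b' := by
    intro z b hb b' hb' hzb hzb'
    by_contra hne
    exact Finset.disjoint_left.mp (hd b hb b' hb' hne) hzb hzb'
  by_cases hx : x ∈ T.sup id
  · by_cases hy : y ∈ T.sup id
    · obtain ⟨bx, hbxT, hxbx⟩ := Finset.mem_sup.mp hx
      obtain ⟨by', hbyT, hyby⟩ := Finset.mem_sup.mp hy
      have keyx : ∀ S ⊆ T, (x ∈ S.sup id ↔ bx ∈ S) := by
        intro S hST
        constructor
        · intro h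
          obtain ⟨b, hbS, hxb⟩ := Finset.mem_sup.mp h
          exact (huniq x b (hST hbS) bx hbxT hxb hxbx) ▸ hbS
        · intro h
          exact Finset.mem_sup.mpr ⟨bx, h, hxbx⟩
      have keyy : ∀ S ⊆ T, (y ∈ S.sup id ↔ by' ∈ S) := by
        intro S hST
        constructor
        · intro h
          obtain ⟨b, hbS, hyb⟩ := Finset.mem_sup.mp h
          exact (huniq y b (hST hbS) by' hbyT hyb hyby) ▸ hbS
        · intro h
          exact Finset.mem_sup.mpr ⟨by', h, hyby⟩
      by_cases heq : bx = by'
      · -- same block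
        have hfil : T.filter (fun bl => x ∈ bl ∧ y ∈ bl) = {bx} := by
          ext bl
          simp only [Finset.mem_filter, Finset.mem_singleton]
          constructor
          · rintro ⟨hblT, hxbl, -⟩
            exact huniq x bl hblT bx hbxT hxbl hxbx
          · rintro rfl
            exact ⟨hbxT, hxbx, heq ▸ hyby⟩
        have hLHS : (T.powersetCard s).filter (fun S => x ∈ S.sup id ∧ y ∈ S.sup id)
            = (T.powersetCard s).filter (fun S => bx ∈ S) := by
          apply Finset.filter_congr
          intro S hS
          rw [Finset.mem_powersetCard] at hS
          simp only [keyx S hS.1, keyy S hS.1, ← heq, and_self, eq_iff_iff]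
        rw [hLHS, aux_one T bx hbxT s hs1, hTcard, hfil]
        simp [Finset.singleton_ne_empty]
      · -- different blocks
        have hfil : T.filter (fun bl => x ∈ bl ∧ y ∈ bl) = ∅ := by
          rw [Finset.filter_eq_empty_iff]
          rintro bl hblT ⟨hxbl, hybl⟩
          exact heq ((huniq x bl hblT bx hbxT hxbl hxbx).symm.trans
            (huniq y bl hblT by' hbyT hybl hyby))
        have hLHS : (T.powersetCard s).filter (fun S => x ∈ S.sup id ∧ y ∈ S.sup id)
            = (T.powersetCard s).filter (fun S => bx ∈ S ∧ by' ∈ S) := by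
          apply Finset.filter_congr
          intro S hS
          rw [Finset.mem_powersetCard] at hS
          simp only [keyx S hS.1, keyy S hS.1, eq_iff_iff]
        rw [hLHS, hfil]
        rw [if_pos ⟨hx, hy, rfl⟩, Finset.card_empty, Nat.zero_mul, Nat.zero_add, Nat.one_mul]
        rcases Nat.lt_or_ge s 2 with hs2 | hs2
        · -- s = 1
          have hs1' : s = 1 := by omega
          subst hs1'
          have : (T.powersetCard 1).filter (fun S => bx ∈ S ∧ by' ∈ S) = ∅ := by
            rw [Finset.filter_eq_empty_iff]
            rintro S hS ⟨h1, h2⟩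
            rw [Finset.mem_powersetCard] at hS
            have : 2 ≤ S.card := Finset.one_lt_card.mpr ⟨bx, h1, by', h2, heq⟩
            omega
          rw [this]
          simp [chooseZ]
        · rw [aux_two T bx by' hbxT hbyT heq s hs2, hTcard]
          have h2 : ((s:ℤ) - 2) = ((s - 2 : ℕ) : ℤ) := by omega
          rw [h2]
          simp only [chooseZ]
          rw [if_neg (by exact_mod_cast Nat.not_lt_zero _), Int.toNat_natCast]
    · -- y not covered
      have hfilS : (T.powersetCard s).filter (fun S => x ∈ S.sup id ∧ y ∈ S.sup id) = ∅ := by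
        rw [Finset.filter_eq_empty_iff]
        rintro S hS ⟨-, hyS⟩
        rw [Finset.mem_powersetCard] at hS
        exact hy (Finset.mem_sup.mp hyS |>.elim fun b hb =>
          Finset.mem_sup.mpr ⟨b, hS.1 hb.1, hb.2⟩)
      have hfil : T.filter (fun bl => x ∈ bl ∧ y ∈ bl) = ∅ := by
        rw [Finset.filter_eq_empty_iff]
        rintro bl hblT ⟨-, hybl⟩
        exact hy (Finset.mem_sup.mpr ⟨bl, hblT, hybl⟩)
      rw [hfilS, hfil]
      simp [hy]
  · have hfilS : (T.powersetCard s).filter (fun S => x ∈ S.sup id ∧ y ∈ S.sup id) = ∅ := by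
      rw [Finset.filter_eq_empty_iff]
      rintro S hS ⟨hxS, -⟩
      rw [Finset.mem_powersetCard] at hS
      exact hx (Finset.mem_sup.mp hxS |>.elim fun b hb =>
        Finset.mem_sup.mpr ⟨b, hS.1 hb.1, hb.2⟩)
    have hfil : T.filter (fun bl => x ∈ bl ∧ y ∈ bl) = ∅ := by
      rw [Finset.filter_eq_empty_iff]
      rintro bl hblT ⟨hxbl, -⟩
      exact hx (Finset.mem_sup.mpr ⟨bl, hblT, hxbl⟩)
    rw [hfilS, hfil]
    simp [hx]

theorem stmt_17 {V : Type*} [Fintype V] (k n : ℕ) (hk : 0 < k) (hn : 0 < n)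
    (hv : Fintype.card V = k * n + 1)
    (R : Fin (k * n + 1) → Finset (Finset V))
    (hclasscard : ∀ c, (R c).card = n)
    (hblocksize : ∀ c, ∀ bl ∈ R c, bl.card = k)
    (hdisj : ∀ c, ∀ b1 ∈ R c, ∀ b2 ∈ R c, b1 ≠ b2 → Disjoint b1 b2)
    (hmiss : ∀ p : V, ∃! c, p ∉ (R c).sup id)
    (hpairs : ∀ x y : V, x ≠ y →
      ∑ c, ((R c).filter (fun bl => x ∈ bl ∧ y ∈ bl)).card = k - 1)
    (s : ℕ) (hs1 : 1 ≤ s) (hsn : s ≤ n) :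
    (∀ c, ∀ S ∈ (R c).powersetCard s, (S.sup id).card = k * s) ∧
    (∀ x y : V, x ≠ y →
      ∑ c, (((R c).powersetCard s).filter
          (fun S => x ∈ S.sup id ∧ y ∈ S.sup id)).card =
        (k - 1) * Nat.choose (n - 1) (s - 1)
          + (k * n - k) * chooseZ (n - 2) ((s : ℤ) - 2)) := by
  have hcovcard : ∀ c, ((R c).sup id).card = k * n := fun c => by
    rw [aux_sup_card k (R c) (hblocksize c) (hdisj c), hclasscard c]
  constructor
  · intro c S hS
    rw [Finset.mem_powersetCard] at hS
    rw [aux_sup_card k S (fun b hb => hblocksize c b (hS.1 hb))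
      (fun b1 h1 b2 h2 hne => hdisj c b1 (hS.1 h1) b2 (hS.1 h2) hne), hS.2]
  · intro x y hxy
    rw [Finset.sum_congr rfl (fun c _ =>
      class_count k n s hs1 (R c) (hclasscard c) (hdisj c) x y hxy)]
    rw [Finset.sum_add_distrib, ← Finset.sum_mul, ← Finset.sum_mul, hpairs x y hxy]
    congr 2
    -- ∑ indicator = k*n - k
    obtain ⟨cx, hcx, hcxu⟩ := hmiss x
    obtain ⟨cy, hcy, hcyu⟩ := hmiss y
    have hne : cx ≠ cy := by
      rintro rfl
      have hsub : ({x, y} : Finset V) ⊆ ((R cx).sup id)ᶜ := by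
        intro z hz
        rw [Finset.mem_compl]
        rcases Finset.mem_insert.mp hz with rfl | hz
        · exact hcx
        · rw [Finset.mem_singleton] at hz; subst hz; exact hcy
      have h1 := Finset.card_le_card hsub
      rw [Finset.card_compl, hcovcard, hv, Finset.card_insert_of_notMem
        (by simp [hxy]), Finset.card_singleton] at h1
      omega
    -- per-class indicator identity
    have hper : ∀ c : Fin (k*n+1),
        (if x ∈ (R c).sup id ∧ y ∈ (R c).sup id ∧
            (R c).filter (fun bl => x ∈ bl ∧ y ∈ bl) = ∅ then 1 else 0)
          + ((R c).filter (fun bl => x ∈ bl ∧ y ∈ bl)).card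
        = (if x ∈ (R c).sup id ∧ y ∈ (R c).sup id then 1 else 0) := by
      intro c
      by_cases hx : x ∈ (R c).sup id
      · by_cases hy : y ∈ (R c).sup id
        · by_cases hemp : (R c).filter (fun bl => x ∈ bl ∧ y ∈ bl) = ∅
          · rw [if_pos ⟨hx, hy, hemp⟩, if_pos ⟨hx, hy⟩, hemp]
            simp
          · rw [if_neg (fun h => hemp h.2.2), if_pos ⟨hx, hy⟩]
            obtain ⟨bl, hbl⟩ := Finset.nonempty_iff_ne_empty.mpr hemp
            have : (R c).filter (fun bl => x ∈ bl ∧ y ∈ bl) = {bl} := by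
              ext bl'
              simp only [Finset.mem_filter, Finset.mem_singleton]
              rw [Finset.mem_filter] at hbl
              constructor
              · rintro ⟨hT, hxb, -⟩
                by_contra hne'
                exact Finset.disjoint_left.mp (hdisj c bl' hT bl hbl.1 hne')
                  hxb hbl.2.1
              · rintro rfl; exact hbl
            rw [this, Finset.card_singleton]
        · have hfil : (R c).filter (fun bl => x ∈ bl ∧ y ∈ bl) = ∅ := by
            rw [Finset.filter_eq_empty_iff]
            rintro bl hbl ⟨-, hybl⟩
            exact hy (Finset.mem_sup.mpr ⟨bl, hbl, hybl⟩)
          rw [if_neg (fun h => hy h.2.1), if_neg (fun h => hy h.2), hfil]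
          simp
      · have hfil : (R c).filter (fun bl => x ∈ bl ∧ y ∈ bl) = ∅ := by
          rw [Finset.filter_eq_empty_iff]
          rintro bl hbl ⟨hxbl, -⟩
          exact hx (Finset.mem_sup.mpr ⟨bl, hbl, hxbl⟩)
        rw [if_neg (fun h => hx h.1), if_neg (fun h => hx h.1), hfil]
        simp
    have hsum2 : (∑ c, if x ∈ (R c).sup id ∧ y ∈ (R c).sup id ∧
            (R c).filter (fun bl => x ∈ bl ∧ y ∈ bl) = ∅ then 1 else 0)
          + ∑ c, ((R c).filter (fun bl => x ∈ bl ∧ y ∈ bl)).card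
        = ∑ c, (if x ∈ (R c).sup id ∧ y ∈ (R c).sup id then 1 else 0) := by
      rw [← Finset.sum_add_distrib]
      exact Finset.sum_congr rfl (fun c _ => hper c)
    rw [hpairs x y hxy] at hsum2
    have hboth : (∑ c, (if x ∈ (R c).sup id ∧ y ∈ (R c).sup id then 1 else 0))
        = k * n - 1 := by
      rw [← Finset.card_filter]
      have hfe : Finset.univ.filter
          (fun c => ¬(x ∈ (R c).sup id ∧ y ∈ (R c).sup id)) = {cx, cy} := by
        ext c
        simp only [Finset.mem_filter, Finset.mem_univ, true_and,
          Finset.mem_insert, Finset.mem_singleton, not_and_or]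
        constructor
        · rintro (h | h)
          · exact Or.inl (hcxu c h)
          · exact Or.inr (hcyu c h)
        · rintro (rfl | rfl)
          · exact Or.inl hcx
          · exact Or.inr hcy
      have htot := Finset.card_filter_add_card_filter_not
        (s := (Finset.univ : Finset (Fin (k*n+1))))
        (p := fun c => x ∈ (R c).sup id ∧ y ∈ (R c).sup id)
      rw [hfe, Finset.card_insert_of_notMem (by simp [hne]),
        Finset.card_singleton, Finset.card_univ, Fintype.card_fin] at htot
      omega
    rw [hboth] at hsum2
    have hkn : k ≤ k * n := Nat.le_mul_of_pos_right k hn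
    omega
end

section
/- Let $q \equiv 1 \pmod 4$ be a prime power and let $D$ be the set of nonzero quadratic residues in $\mathbb{F}_q$. For $x \in \mathbb{F}_q^*$ let $D_x = D \cap (D + x)$ and define $\bar{D}_x = D_x$ if $x$ is a nonsquare and $\bar{D}_x = D_x \cup \{0\}$ if $x$ is a nonzero square. Then $\{\bar{D}_x : x \in \mathbb{F}_q^*\}$ is a $\left(q, \frac{q-1}{4}, \frac{(q-1)(q-5)}{16}; q-1\right)$ difference family in $(\mathbb{F}_q, +)$: each $\bar{D}_x$ has $(q-1)/4$ elements, and every nonzero $g \in \mathbb{F}_q$ occurs exactly $(q-1)(q-5)/16$ times in the multiset union over all $x$ of $\{d_1 - d_2 : d_1, d_2 \in \bar{D}_x, d_1 \ne d_2\}$. -/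
/-!
Write `D_x = D ∩ (D + x)` and `χ` for the quadratic character. Expanding
`∑_y (1 + χ y) (1 + χ (y - x))`, whose correlation term `∑_y χ y χ (y - x) = -1` is a Jacobi
sum, gives `4 |D_x| + 4 [x ∈ D] + 1 = q`; so every `D̄_x` has `(q - 1) / 4` elements.

Membership `y ∈ D_x ∩ (D_x + g)` means `y, y - x, y - g, y - x - g ∈ D`, which is symmetric in
`x` and `g`. Hence `∑_{x ≠ 0} |D_x ∩ (D_x + g)| = ∑_{x ≠ 0} |D_g ∩ (D_g + x)| = λ (λ - 1)` with
`λ = |D_g|`, counting ordered pairs of distinct elements of `D_g`. Adjoining `0` to `D_x` adds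
the representations `g = g - 0` and `g = 0 - (-g)`; since `D = -D`, each occurs for exactly `λ`
values of `x` if `g ∈ D` and for none otherwise. Inserting the value of `λ` finishes the count.
-/

open scoped Classical

open Finset

noncomputable def shiftInter {G : Type*} [AddCommGroup G] (S : Finset G) (x : G) : Finset G :=
  S ∩ S.image (· + x)

section Shifts

variable {G : Type*} [AddCommGroup G]

theorem mem_shiftInter {S : Finset G} {x y : G} : y ∈ shiftInter S x ↔ y ∈ S ∧ y - x ∈ S := by
  simp only [shiftInter, mem_inter, mem_image, and_congr_right_iff]
  exact fun _ => ⟨fun ⟨a, ha, hay⟩ => by rwa [← hay, add_sub_cancel_right],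
    fun h => ⟨y - x, h, sub_add_cancel y x⟩⟩

theorem shiftInter_shiftInter_comm (S : Finset G) (x g : G) :
    shiftInter (shiftInter S x) g = shiftInter (shiftInter S g) x := by
  ext y
  simp only [mem_shiftInter, sub_right_comm y g x]
  tauto

theorem shiftInter_eq_filter (S : Finset G) (x : G) : shiftInter S x = S.filter (· - x ∈ S) := by
  ext y
  rw [mem_shiftInter, mem_filter]

theorem card_shiftInter_neg (S : Finset G) (g : G) : #(shiftInter S (-g)) = #(shiftInter S g) :=
  card_nbij' (· + g) (· - g)
    (fun y hy => by simp_all [mem_shiftInter, sub_neg_eq_add])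
    (fun y hy => by simp_all [mem_shiftInter, sub_neg_eq_add])
    (fun y _ => add_sub_cancel_right y g) (fun y _ => sub_add_cancel y g)

theorem card_filter_sub_eq_card_shiftInter (S : Finset G) {g : G} (hg : g ≠ 0) :
    #((S ×ˢ S).filter (fun p => p.1 ≠ p.2 ∧ p.1 - p.2 = g)) = #(shiftInter S g) :=
  card_nbij' Prod.fst (fun y => (y, y - g))
    (fun p hp => by
      simp only [coe_filter, mem_product, Set.mem_ofPred_eq] at hp
      rw [mem_coe, mem_shiftInter, ← hp.2.2, sub_sub_cancel]
      exact ⟨hp.1.1, hp.1.2⟩)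
    (fun y hy => by
      rw [mem_coe, mem_shiftInter] at hy
      simp only [coe_filter, mem_product, Set.mem_ofPred_eq]
      exact ⟨hy, fun h => hg (sub_eq_self.mp h.symm), sub_sub_cancel y g⟩)
    (fun p hp => by
      simp only [coe_filter, Set.mem_ofPred_eq] at hp
      simp [← hp.2.2])
    (fun y _ => rfl)

theorem card_shiftInter_insert_zero {T : Finset G} (hT : 0 ∉ T) {g : G} (hg : g ≠ 0) :
    #(shiftInter (insert 0 T) g) =
      #(shiftInter T g) + (if g ∈ T then 1 else 0) + (if -g ∈ T then 1 else 0) := by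
  have hT' : ∀ y ∈ T, (if y - g ∈ insert 0 T then 1 else 0) =
      (if y - g ∈ T then 1 else 0) + if g = y then 1 else 0 := by
    intro y hy
    by_cases hgy : g = y
    · subst hgy
      simp [hT]
    · simp [sub_eq_zero, Ne.symm hgy, hgy]
  rw [shiftInter_eq_filter, shiftInter_eq_filter, card_filter, card_filter, sum_insert hT,
    sum_congr rfl hT', sum_add_distrib, sum_ite_eq]
  simp [hg, add_comm]

variable [Fintype G]

theorem sum_card_shiftInter_add_card (B : Finset G) :
    ∑ x ∈ univ.filter (· ≠ 0), #(shiftInter B x) + #B = #B * #B := by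
  have hfiber : ∀ x ∈ univ.filter (· ≠ 0),
      #(shiftInter B x) = #(B.offDiag.filter (fun p => p.1 - p.2 = x)) := by
    intro x hx
    rw [← card_filter_sub_eq_card_shiftInter B (mem_filter.1 hx).2]
    congr 1
    ext p
    simp only [mem_filter, mem_product, mem_offDiag]
    tauto
  have hmaps : ∀ p ∈ B.offDiag, p.1 - p.2 ∈ univ.filter (· ≠ 0) := fun p hp => by
    simpa [sub_eq_zero] using (mem_offDiag.1 hp).2.2
  rw [sum_congr rfl hfiber, ← card_eq_sum_card_fiberwise hmaps, offDiag_card,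
    Nat.sub_add_cancel (Nat.le_mul_self _)]

end Shifts

noncomputable def shiftInterWithZero {G : Type*} [AddCommGroup G] (D : Finset G) (x : G) :
    Finset G :=
  if x ∈ D then insert 0 (shiftInter D x) else shiftInter D x

section SymmetricSet

variable {G : Type*} [AddCommGroup G] [Fintype G] {D : Finset G}

theorem card_filter_mem_and_mem_shiftInter (hD0 : 0 ∉ D) (hDneg : ∀ y, -y ∈ D ↔ y ∈ D)
    (h : G) : #((univ.filter (· ≠ 0)).filter (fun x => x ∈ D ∧ h ∈ shiftInter D x)) =
      if h ∈ D then #(shiftInter D h) else 0 := by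
  split_ifs with hh
  · congr 1
    ext x
    simp only [mem_filter, mem_univ, true_and, mem_shiftInter, ← hDneg (h - x), neg_sub]
    exact ⟨fun hx => ⟨hx.2.1, hx.2.2.2⟩,
      fun hx => ⟨fun hx0 => hD0 (hx0 ▸ hx.1), hx.1, hh, hx.2⟩⟩
  · rw [card_eq_zero, filter_eq_empty_iff]
    exact fun x _ hx => hh (mem_shiftInter.1 hx.2).1

theorem sum_card_shiftInter_shiftInterWithZero_add (hD0 : 0 ∉ D)
    (hDneg : ∀ y, -y ∈ D ↔ y ∈ D) {g : G} (hg : g ≠ 0) :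
    ∑ x ∈ univ.filter (· ≠ 0), #(shiftInter (shiftInterWithZero D x) g) + #(shiftInter D g) =
      #(shiftInter D g) * #(shiftInter D g) + 2 * if g ∈ D then #(shiftInter D g) else 0 := by
  have hpoint : ∀ x, #(shiftInter (shiftInterWithZero D x) g) =
      #(shiftInter (shiftInter D g) x) + (if x ∈ D ∧ g ∈ shiftInter D x then 1 else 0) +
        (if x ∈ D ∧ -g ∈ shiftInter D x then 1 else 0) := by
    intro x
    rw [shiftInterWithZero, shiftInter_shiftInter_comm]
    by_cases hx : x ∈ D
    · simp only [hx, if_true, true_and]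
      exact card_shiftInter_insert_zero (fun h0 => hD0 (mem_shiftInter.1 h0).1) hg
    · simp only [hx, if_false, false_and, add_zero]
  have hpairs := sum_card_shiftInter_add_card (shiftInter D g)
  rw [sum_congr rfl (fun x _ => hpoint x), sum_add_distrib, sum_add_distrib, ← card_filter,
    ← card_filter, card_filter_mem_and_mem_shiftInter hD0 hDneg,
    card_filter_mem_and_mem_shiftInter hD0 hDneg, card_shiftInter_neg]
  simp only [hDneg]
  split_ifs <;> omega

end SymmetricSet

noncomputable def nonzeroSquares (F : Type*) [Field F] [Fintype F] : Finset F :=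
  univ.filter (fun x => x ≠ 0 ∧ IsSquare x)

section NonzeroSquares

variable {F : Type*} [Field F] [Fintype F]

theorem mem_nonzeroSquares {y : F} : y ∈ nonzeroSquares F ↔ y ≠ 0 ∧ IsSquare y := by
  simp [nonzeroSquares]

theorem zero_notMem_nonzeroSquares : (0 : F) ∉ nonzeroSquares F := by
  simp [mem_nonzeroSquares]

theorem ringChar_ne_two_of_card_mod_four (hF : Fintype.card F % 4 = 1) : ringChar F ≠ 2 :=
  fun h => by have := FiniteField.even_card_of_char_two h; omega

theorem quadraticChar_neg_one_of_card_mod_four (hF : Fintype.card F % 4 = 1) :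
    quadraticChar F (-1) = 1 :=
  (quadraticChar_one_iff_isSquare (neg_ne_zero.2 one_ne_zero)).2
    (FiniteField.isSquare_neg_one_iff.2 (by omega))

theorem quadraticChar_neg_of_card_mod_four (hF : Fintype.card F % 4 = 1) (y : F) :
    quadraticChar F (-y) = quadraticChar F y := by
  rw [neg_eq_neg_one_mul, map_mul, quadraticChar_neg_one_of_card_mod_four hF, one_mul]

theorem neg_mem_nonzeroSquares_iff (hF : Fintype.card F % 4 = 1) {y : F} :
    -y ∈ nonzeroSquares F ↔ y ∈ nonzeroSquares F := by
  by_cases hy : y = 0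
  · rw [hy, neg_zero]
  rw [mem_nonzeroSquares, mem_nonzeroSquares, ← quadraticChar_one_iff_isSquare hy,
    ← quadraticChar_one_iff_isSquare (neg_ne_zero.2 hy), quadraticChar_neg_of_card_mod_four hF]
  simp [hy]

theorem sum_quadraticChar_mul_quadraticChar_sub (hF : ringChar F ≠ 2) {x : F} (hx : x ≠ 0) :
    ∑ y, quadraticChar F y * quadraticChar F (y - x) = -1 := by
  set χ := quadraticChar F
  have hJ : jacobiSum χ χ = -χ (-1) := by
    have := jacobiSum_nontrivial_inv (quadraticChar_ne_one hF)
    rwa [(quadraticChar_isQuadratic F).inv] at this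
  calc ∑ y, χ y * χ (y - x) = ∑ t, χ (x * t) * χ (x * t - x) :=
        (Fintype.sum_bijective (x * ·) (mulLeft_bijective₀ x hx) _ _ fun _ => rfl).symm
    _ = ∑ t, χ (-1) * (χ t * χ (1 - t)) := sum_congr rfl fun t _ => by
        rw [show x * t - x = -1 * x * (1 - t) by ring, map_mul, map_mul, map_mul]
        linear_combination χ (-1) * χ t * χ (1 - t) * quadraticChar_sq_one hx
    _ = χ (-1) * jacobiSum χ χ := (mul_sum ..).symm
    _ = -1 := by
        rw [hJ, mul_neg, ← sq, quadraticChar_sq_one (neg_ne_zero.2 one_ne_zero)]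

theorem one_add_quadraticChar (y : F) :
    1 + quadraticChar F y =
      2 * (if y ∈ nonzeroSquares F then 1 else 0) + if y = 0 then 1 else 0 := by
  by_cases hy : y = 0
  · simp [hy, mem_nonzeroSquares]
  by_cases hsq : IsSquare y
  · simp [hy, hsq, mem_nonzeroSquares, (quadraticChar_one_iff_isSquare hy).2 hsq]
  · simp [hy, hsq, mem_nonzeroSquares, quadraticChar_neg_one_iff_not_isSquare.2 hsq]

theorem one_add_quadraticChar_mul_one_add_quadraticChar_sub (hF : Fintype.card F % 4 = 1)
    {x : F} (hx : x ≠ 0) (y : F) :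
    (1 + quadraticChar F y) * (1 + quadraticChar F (y - x)) =
      4 * (if y ∈ shiftInter (nonzeroSquares F) x then 1 else 0) +
        (if y = 0 then 1 + quadraticChar F x else 0) +
          if y = x then 1 + quadraticChar F x else 0 := by
  by_cases hy0 : y = 0
  · simp [hy0, Ne.symm hx, mem_shiftInter, zero_notMem_nonzeroSquares,
      quadraticChar_neg_of_card_mod_four hF]
  by_cases hyx : y = x
  · simp [hyx, hx, mem_shiftInter, zero_notMem_nonzeroSquares]
  rw [one_add_quadraticChar, one_add_quadraticChar]
  simp only [mem_shiftInter, hy0, hyx, sub_eq_zero, if_false, add_zero, ite_and]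
  split_ifs <;> norm_num

theorem card_shiftInter_nonzeroSquares (hF : Fintype.card F % 4 = 1) {x : F} (hx : x ≠ 0) :
    4 * #(shiftInter (nonzeroSquares F) x) + 4 * (if x ∈ nonzeroSquares F then 1 else 0) + 1 =
      Fintype.card F := by
  have hchar := ringChar_ne_two_of_card_mod_four hF
  have hshift : ∑ y, quadraticChar F (y - x) = 0 :=
    (Fintype.sum_equiv (Equiv.subRight x) _ _ fun _ => rfl).trans (quadraticChar_sum_zero hchar)
  have hexpand : ∑ y, (1 + quadraticChar F y) * (1 + quadraticChar F (y - x)) =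
      Fintype.card F - 1 := by
    simp only [add_mul, one_mul, mul_add, mul_one, sum_add_distrib, sum_const, card_univ,
      quadraticChar_sum_zero hchar, hshift, sum_quadraticChar_mul_quadraticChar_sub hchar hx]
    ring
  have hcount : ∑ y, (1 + quadraticChar F y) * (1 + quadraticChar F (y - x)) =
      4 * #(shiftInter (nonzeroSquares F) x) + 2 * (1 + quadraticChar F x) := by
    simp only [one_add_quadraticChar_mul_one_add_quadraticChar_sub hF hx, sum_add_distrib,
      ← mul_sum, sum_boole, sum_ite_eq', mem_univ, if_true]
    simp only [filter_mem_eq_inter, univ_inter]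
    ring
  have hχx := one_add_quadraticChar x
  simp only [hx, if_false, add_zero] at hχx
  zify
  linear_combination hcount.symm.trans hexpand - 2 * hχx

theorem card_shiftInterWithZero_nonzeroSquares (hF : Fintype.card F % 4 = 1) {x : F}
    (hx : x ≠ 0) : 4 * #(shiftInterWithZero (nonzeroSquares F) x) + 1 = Fintype.card F := by
  have hcard := card_shiftInter_nonzeroSquares hF hx
  have h0 : (0 : F) ∉ shiftInter (nonzeroSquares F) x :=
    fun h => zero_notMem_nonzeroSquares (mem_shiftInter.1 h).1
  rw [shiftInterWithZero]
  split_ifs at hcard ⊢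
  · rw [card_insert_of_notMem h0]
    omega
  · omega

end NonzeroSquares

theorem stmt_18_general (q : ℕ) (hq1 : q % 4 = 1)
    {F : Type*} [Field F] [Fintype F] (hF : Fintype.card F = q)
    (D : Finset F)
    (hD : D = Finset.univ.filter (fun x : F => x ≠ 0 ∧ IsSquare x))
    (Dbar : F → Finset F)
    (hDbar : ∀ x : F, Dbar x =
      if IsSquare x then insert 0 (D ∩ D.image (· + x))
      else D ∩ D.image (· + x)) :
    (∀ x : F, x ≠ 0 → 4 * (Dbar x).card = q - 1) ∧
    (∀ g : F, g ≠ 0 →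
      16 * ∑ x ∈ Finset.univ.filter (fun x : F => x ≠ 0),
        (((Dbar x) ×ˢ (Dbar x)).filter
          (fun p => p.1 ≠ p.2 ∧ p.1 - p.2 = g)).card
        = (q - 1) * (q - 5)) := by
  subst hF
  replace hD : D = nonzeroSquares F := hD
  subst hD
  have hDbar' : ∀ x ≠ 0, Dbar x = shiftInterWithZero (nonzeroSquares F) x := fun x hx => by
    simp only [hDbar, shiftInterWithZero, mem_nonzeroSquares, hx, ne_eq, not_false_eq_true,
      true_and]
    rfl
  refine ⟨fun x hx => ?_, fun g hg => ?_⟩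
  · have := card_shiftInterWithZero_nonzeroSquares hq1 hx
    rw [hDbar' x hx]
    omega
  have hsum := sum_card_shiftInter_shiftInterWithZero_add zero_notMem_nonzeroSquares
    (fun _ => neg_mem_nonzeroSquares_iff hq1) hg
  have hcard := card_shiftInter_nonzeroSquares hq1 hg
  have h5 : 5 ≤ Fintype.card F := by have := Fintype.one_lt_card (α := F); omega
  rw [sum_congr rfl fun x hx => by
    rw [hDbar' x (mem_filter.1 hx).2, card_filter_sub_eq_card_shiftInter _ hg]]
  zify [h5, (by omega : 1 ≤ Fintype.card F)] at hsum hcard ⊢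
  split_ifs at hsum hcard <;>
  · rw [← hcard]
    linear_combination 16 * hsum

theorem stmt_18 (q : ℕ) (hq : IsPrimePow q) (hq1 : q % 4 = 1)
    {F : Type*} [Field F] [Fintype F] (hF : Fintype.card F = q)
    (D : Finset F)
    (hD : D = Finset.univ.filter (fun x : F => x ≠ 0 ∧ IsSquare x))
    (Dbar : F → Finset F)
    (hDbar : ∀ x : F, Dbar x =
      if IsSquare x then insert 0 (D ∩ D.image (· + x))
      else D ∩ D.image (· + x)) :
    (∀ x : F, x ≠ 0 → 4 * (Dbar x).card = q - 1) ∧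
    (∀ g : F, g ≠ 0 →
      16 * ∑ x ∈ Finset.univ.filter (fun x : F => x ≠ 0),
        (((Dbar x) ×ˢ (Dbar x)).filter
          (fun p => p.1 ≠ p.2 ∧ p.1 - p.2 = g)).card
        = (q - 1) * (q - 5)) :=
  stmt_18_general q hq1 hF D hD Dbar hDbar
end

section
/- Let $q$ be an odd prime power with $q - 1 = e\ell$ for integers $e > 1$, $\ell > 1$, let $\alpha$ be a generator of $\mathbb{F}_q^*$, and let $C_i^{(e)} = \alpha^i \langle \alpha^e \rangle$ for $0 \le i \le e-1$ be the cyclotomic classes of order $e$. Then $\{C_0^{(e)}, \ldots, C_{e-1}^{(e)}\}$ is a disjoint difference family in $(\mathbb{F}_q, +)$ with parameters $(q, (q-1)/e, (q-1-e)/e; e)$: the classes partition $\mathbb{F}_q^*$, each has size $(q-1)/e$, and every nonzero element of $\mathbb{F}_q$ arises exactly $(q-1-e)/e$ times as a difference $d_1 - d_2$ of distinct elements within a common class, summed over all classes. -/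
open scoped Classical

theorem stmt_19 (q e ℓ : ℕ) (he : 1 < e) (hℓ : 1 < ℓ) (hq : q - 1 = e * ℓ)
    (hodd : Odd q)
    {F : Type*} [Field F] [Fintype F] (hF : Fintype.card F = q)
    (α : Fˣ) (hα : ∀ x : Fˣ, x ∈ Subgroup.zpowers α)
    (C : ℕ → Finset F)
    (hC : ∀ i, C i = Finset.univ.filter
      (fun x : F => ∃ j : ℕ, x = (α : F) ^ i * ((α : F) ^ e) ^ j)) :
    (∀ x : F, x ≠ 0 → ∃! i : ℕ, i < e ∧ x ∈ C i) ∧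
    (∀ i < e, e * (C i).card = q - 1) ∧
    (∀ g : F, g ≠ 0 →
      e * ∑ i ∈ Finset.range e,
        (((C i) ×ˢ (C i)).filter (fun p => p.1 ≠ p.2 ∧ p.1 - p.2 = g)).card
        = q - 1 - e) := by
  have he0 : 0 < e := by omega
  have hℓ0 : 0 < ℓ := by omega
  have hcardU : Fintype.card Fˣ = e * ℓ := by
    rw [Fintype.card_units, hF, hq]
  have hordα : orderOf α = e * ℓ := by
    rw [orderOf_eq_card_of_forall_mem_zpowers hα, Nat.card_eq_fintype_card, hcardU]
  have horde : orderOf (α ^ e) = ℓ := by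
    rw [orderOf_pow, hordα, Nat.gcd_eq_right (dvd_mul_right e ℓ),
      Nat.mul_div_cancel_left _ he0]
  have hord1 : α ^ (e * ℓ) = 1 := by rw [← hordα]; exact pow_orderOf_eq_one α
  -- membership characterizations
  have hCmem : ∀ (x : F) (i : ℕ), x ∈ C i ↔ ∃ j : ℕ, x = (α : F) ^ i * ((α : F) ^ e) ^ j := by
    intro x i
    rw [hC, Finset.mem_filter]
    simp
  have hmemU : ∀ (u : Fˣ) (i : ℕ), (u : F) ∈ C i ↔ ∃ j : ℕ, u = α ^ i * (α ^ e) ^ j := by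
    intro u i
    rw [hCmem]
    constructor
    · rintro ⟨j, hj⟩
      exact ⟨j, Units.ext (by push_cast; exact hj)⟩
    · rintro ⟨j, hj⟩
      exact ⟨j, by rw [hj]; push_cast; ring⟩
  have hne0 : ∀ i, ∀ x ∈ C i, x ≠ 0 := by
    intro i x hx
    rw [hCmem] at hx
    obtain ⟨j, hj⟩ := hx
    rw [hj]
    exact mul_ne_zero (pow_ne_zero _ (Units.ne_zero α))
      (pow_ne_zero _ (pow_ne_zero _ (Units.ne_zero α)))
  have hlog : ∀ u : Fˣ, ∃ n : ℕ, u = α ^ n := by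
    intro u
    obtain ⟨n, hn⟩ := mem_powers_iff_mem_zpowers.mpr (hα u)
    exact ⟨n, hn.symm⟩
  -- class characterization by exponent mod e
  have hclass : ∀ (n i : ℕ), ((α ^ n : Fˣ) : F) ∈ C i ↔ n % e = i % e := by
    intro n i
    rw [hmemU]
    constructor
    · rintro ⟨j, hj⟩
      have h1 : α ^ n = α ^ (i + e * j) := by
        rw [hj, pow_add, pow_mul]
      rw [pow_eq_pow_iff_modEq, hordα] at h1
      have h2 : n ≡ i + e * j [MOD e] := Nat.ModEq.of_mul_right ℓ h1
      unfold Nat.ModEq at h2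
      rwa [Nat.add_mul_mod_self_left] at h2
    · intro h
      set N : ℕ := n + e * ℓ * (i + 1) with hN
      have hiN : i ≤ N := by
        have : i + 1 ≤ e * ℓ * (i + 1) :=
          Nat.le_mul_of_pos_left _ (Nat.mul_pos he0 hℓ0)
        omega
      have hmodN : i ≡ N [MOD e] := by
        unfold Nat.ModEq
        rw [hN, mul_assoc, Nat.add_mul_mod_self_left, h]
      obtain ⟨j, hj⟩ := (Nat.modEq_iff_dvd' hiN).mp hmodN
      refine ⟨j, ?_⟩
      have hNe : i + e * j = N := by omega
      have : α ^ i * (α ^ e) ^ j = α ^ N := by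
        rw [← pow_mul, ← pow_add, hNe]
      rw [this, hN, pow_add, pow_mul, hord1, one_pow, mul_one]
  -- Part 1
  have part1 : ∀ x : F, x ≠ 0 → ∃! i : ℕ, i < e ∧ x ∈ C i := by
    intro x hx
    obtain ⟨n, hn⟩ := hlog (Units.mk0 x hx)
    have hxα : x = ((α ^ n : Fˣ) : F) := by rw [← hn]; rfl
    refine ⟨n % e, ⟨Nat.mod_lt _ he0, ?_⟩, ?_⟩
    · rw [hxα, hclass]
      exact (Nat.mod_eq_of_lt (Nat.mod_lt _ he0)).symm
    · rintro i ⟨hie, hi⟩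
      rw [hxα, hclass] at hi
      rw [Nat.mod_eq_of_lt hie] at hi
      exact hi.symm
  -- cardinality of classes
  have hcard : ∀ i, (C i).card = ℓ := by
    intro i
    have himg : C i = (Finset.range ℓ).image (fun j => ((α ^ i * (α ^ e) ^ j : Fˣ) : F)) := by
      ext x
      rw [hCmem]
      simp only [Finset.mem_image, Finset.mem_range]
      constructor
      · rintro ⟨j, hj⟩
        refine ⟨j % ℓ, Nat.mod_lt _ hℓ0, ?_⟩
        have : (α ^ e) ^ (j % ℓ) = (α ^ e) ^ j := by
          rw [← horde]; exact pow_mod_orderOf _ _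
        rw [this]
        push_cast
        exact hj.symm
      · rintro ⟨j, -, hj⟩
        exact ⟨j, by rw [← hj]; push_cast; ring⟩
    rw [himg, Finset.card_image_of_injOn, Finset.card_range]
    intro j hj j' hj' hjj'
    simp only [Finset.mem_coe, Finset.mem_range] at hj hj'
    have h1 : (α ^ i * (α ^ e) ^ j : Fˣ) = α ^ i * (α ^ e) ^ j' := Units.ext hjj'
    have h2 : ((α ^ e : Fˣ)) ^ j = (α ^ e) ^ j' := mul_left_cancel h1
    rw [pow_eq_pow_iff_modEq, horde] at h2
    unfold Nat.ModEq at h2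
    rw [Nat.mod_eq_of_lt hj, Nat.mod_eq_of_lt hj'] at h2
    exact h2
  have part2 : ∀ i < e, e * (C i).card = q - 1 := by
    intro i _
    rw [hcard, hq]
  refine ⟨part1, part2, ?_⟩
  -- Part 3
  intro g hg
  set P : ℕ → Finset (F × F) :=
    fun i => ((C i ×ˢ C i).filter (fun p => p.1 ≠ p.2 ∧ p.1 - p.2 = g)) with hP
  have hdisj : ∀ i ∈ Finset.range e, ∀ i' ∈ Finset.range e, i ≠ i' → Disjoint (P i) (P i') := by
    intro i hi i' hi' hii'
    rw [Finset.disjoint_left]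
    intro p hp hp'
    simp only [hP, Finset.mem_filter, Finset.mem_product] at hp hp'
    obtain ⟨⟨h1, -⟩, -⟩ := hp
    obtain ⟨⟨h1', -⟩, -⟩ := hp'
    obtain ⟨w, ⟨-, -⟩, hw⟩ := part1 p.1 (hne0 i _ h1)
    have := hw i ⟨Finset.mem_range.mp hi, h1⟩
    have := hw i' ⟨Finset.mem_range.mp hi', h1'⟩
    omega
  have hsum : ∑ i ∈ Finset.range e, (P i).card = ((Finset.range e).biUnion P).card :=
    (Finset.card_biUnion hdisj).symm
  -- the target set of "quotients"
  set D : Finset F := (C 0).erase 1 with hD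
  have h1C0 : (1 : F) ∈ C 0 := by
    rw [hCmem]
    exact ⟨0, by simp⟩
  have hDcard : D.card = ℓ - 1 := by
    rw [hD, Finset.card_erase_of_mem h1C0, hcard]
  have hbij : ((Finset.range e).biUnion P).card = D.card := by
    refine Finset.card_bij (fun p _ => p.1 * p.2⁻¹) ?_ ?_ ?_
    · -- maps into D
      intro p hp
      simp only [Finset.mem_biUnion, Finset.mem_range] at hp
      obtain ⟨i, hi, hpi⟩ := hp
      simp only [hP, Finset.mem_filter, Finset.mem_product] at hpi
      obtain ⟨⟨hx, hy⟩, hxy, hdiff⟩ := hpi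
      have hx0 : p.1 ≠ 0 := hne0 i _ hx
      have hy0 : p.2 ≠ 0 := hne0 i _ hy
      set ux : Fˣ := Units.mk0 p.1 hx0 with hux
      set uy : Fˣ := Units.mk0 p.2 hy0 with huy
      obtain ⟨j, hj⟩ := (hmemU ux i).mp hx
      obtain ⟨j', hj'⟩ := (hmemU uy i).mp hy
      have key : ux * uy⁻¹ = (α ^ e) ^ j * ((α ^ e) ^ j')⁻¹ := by
        rw [hj, hj', mul_inv, mul_mul_mul_comm]
        simp
      have hz : ux * uy⁻¹ ∈ Subgroup.zpowers (α ^ e) := by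
        rw [key]
        exact mul_mem (Subgroup.npow_mem_zpowers _ _)
          (inv_mem (Subgroup.npow_mem_zpowers _ _))
      obtain ⟨m, hm⟩ := mem_powers_iff_mem_zpowers.mpr hz
      have hm2 : (α ^ e) ^ m = ux * uy⁻¹ := hm
      have hval : p.1 * p.2⁻¹ = ((ux * uy⁻¹ : Fˣ) : F) := by
        rw [Units.val_mul, Units.val_inv_eq_inv_val]
        rfl
      have hne1 : p.1 * p.2⁻¹ ≠ 1 := by
        intro hcontr
        apply hxy
        have : p.1 * p.2⁻¹ * p.2 = 1 * p.2 := by rw [hcontr]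
        rwa [mul_assoc, inv_mul_cancel₀ hy0, mul_one, one_mul] at this
      have hmem0 : p.1 * p.2⁻¹ ∈ C 0 := by
        rw [hval, ← hm2, hmemU]
        exact ⟨m, by rw [pow_zero, one_mul]⟩
      exact Finset.mem_erase.mpr ⟨hne1, hmem0⟩
    · -- injective
      intro p hp p' hp' hpp'
      have hpq : p.1 * p.2⁻¹ = p'.1 * p'.2⁻¹ := hpp'
      simp only [Finset.mem_biUnion, Finset.mem_range] at hp hp'
      obtain ⟨i, hi, hpi⟩ := hp
      obtain ⟨i', hi', hpi'⟩ := hp'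
      simp only [hP, Finset.mem_filter, Finset.mem_product] at hpi hpi'
      obtain ⟨⟨hx, hy⟩, hxy, hdiff⟩ := hpi
      obtain ⟨⟨hx', hy'⟩, hxy', hdiff'⟩ := hpi'
      have hy0 : p.2 ≠ 0 := hne0 i _ hy
      have hy0' : p'.2 ≠ 0 := hne0 i' _ hy'
      set c : F := p.1 * p.2⁻¹ with hc
      have hcy : p.1 = c * p.2 := by
        rw [hc, mul_assoc, inv_mul_cancel₀ hy0, mul_one]
      have hcy' : p'.1 = c * p'.2 := by
        rw [hpq, mul_assoc, inv_mul_cancel₀ hy0', mul_one]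
      have hc1 : c ≠ 1 := by
        intro h
        apply hxy
        rw [hcy, h, one_mul]
      have hgy : (c - 1) * p.2 = g := by rw [sub_mul, one_mul, ← hcy, hdiff]
      have hgy' : (c - 1) * p'.2 = g := by rw [sub_mul, one_mul, ← hcy', hdiff']
      have hyy : p.2 = p'.2 := by
        have hc0 : c - 1 ≠ 0 := sub_ne_zero.mpr hc1
        exact mul_left_cancel₀ hc0 (hgy.trans hgy'.symm)
      have hxx : p.1 = p'.1 := by rw [hcy, hcy', hyy]
      exact Prod.ext hxx hyy
    · -- surjective
      intro c hcD
      rw [hD, Finset.mem_erase] at hcD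
      obtain ⟨hc1, hc0mem⟩ := hcD
      have hcsub : c - 1 ≠ 0 := sub_ne_zero.mpr hc1
      obtain ⟨j, hj⟩ := (hCmem c 0).mp hc0mem
      set y : F := g * (c - 1)⁻¹ with hy
      have hy0 : y ≠ 0 := mul_ne_zero hg (inv_ne_zero hcsub)
      set x : F := c * y with hx
      have hxy : x ≠ y := by
        intro h
        have h2 : (c - 1) * y = 0 := by rw [sub_mul, one_mul, ← hx, h, sub_self]
        rcases mul_eq_zero.mp h2 with h' | h'
        · exact hcsub h'
        · exact hy0 h'
      have hdiff : x - y = g := by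
        have h3 : x - y = (c - 1) * y := by rw [hx]; ring
        rw [h3, hy, mul_comm g, ← mul_assoc, mul_inv_cancel₀ hcsub, one_mul]
      obtain ⟨i, ⟨hie, hyC⟩, -⟩ := part1 y hy0
      have hxC : x ∈ C i := by
        obtain ⟨j', hj'⟩ := (hCmem y i).mp hyC
        rw [hCmem]
        refine ⟨j + j', ?_⟩
        rw [hx, hj, hj', pow_zero, one_mul, pow_add]
        ring
      refine ⟨(x, y), ?_, ?_⟩
      · refine Finset.mem_biUnion.mpr ⟨i, Finset.mem_range.mpr hie, ?_⟩
        simp only [hP, Finset.mem_filter, Finset.mem_product]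
        exact ⟨⟨hxC, hyC⟩, hxy, hdiff⟩
      · show x * y⁻¹ = c
        rw [hx, mul_assoc, mul_inv_cancel₀ hy0, mul_one]
  have hfinal : ∑ i ∈ Finset.range e,
      (((C i) ×ˢ (C i)).filter (fun p => p.1 ≠ p.2 ∧ p.1 - p.2 = g)).card = ℓ - 1 := by
    rw [← hP] at *
    rw [hsum, hbij, hDcard]
  rw [hfinal, Nat.mul_sub_one]
  omega
end
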